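/- arXiv:1411.5729 — 6 statements merged into one kernel-verified Lean document; each statement's English description precedes it below -/
import Mathlib

section
/- Let f_1,…,f_k : {0,1}^n → {-1,1} be Boolean functions, and for each x ∈ {0,1}^n define f_k^{(x)}(z) := f_k(z)·(-1)^{z·x}. Then Σ_{x ∈ {0,1}^n} Φ_{f_1,…,f_{k-1},f_k^{(x)}}^2 = 1, where Φ_{f_1,…,f_k} := (1/2^{(k+1)n/2}) · Σ_{x_1,…,x_k} f_1(x_1)(-1)^{x_1·x_2} f_2(x_2) ⋯ (-1)^{x_{k-1}·x_k} f_k(x_k). -/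
open Finset

/-- The mod-2 inner product of two bit strings (as a natural-number count,
used as the exponent of `-1`). -/
def ip {n : ℕ} (x y : Fin n → Bool) : ℕ := ∑ i, (x i && y i).toNat

/-- The k-fold forrelation quantity
`Φ_{f_1,…,f_k} = (1/2^{(k+1)n/2}) Σ_{x_1,…,x_k} f_1(x_1)(-1)^{x_1·x_2} ⋯ (-1)^{x_{k-1}·x_k} f_k(x_k)`. -/
noncomputable def phiK (k n : ℕ) (fs : Fin k → (Fin n → Bool) → ℝ) : ℝ :=
  (∑ x : Fin k → (Fin n → Bool),
      (∏ i, fs i (x i)) *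
      ∏ i : Fin k, (if h : (i : ℕ) + 1 < k then (-1 : ℝ) ^ ip (x i) (x ⟨(i : ℕ) + 1, h⟩) else 1)) /
    Real.sqrt ((2 : ℝ) ^ ((k + 1) * n))

/-! ### Auxiliary definitions -/

/-- The chain of `(-1)^{x_i · x_{i+1}}` signs. -/
def chainProd {n : ℕ} (k : ℕ) (x : Fin k → (Fin n → Bool)) : ℝ :=
  ∏ i : Fin k, (if h : (i : ℕ) + 1 < k then (-1 : ℝ) ^ ip (x i) (x ⟨(i : ℕ) + 1, h⟩) else 1)

/-- The partial chain sum `h_k(y) = Σ_z f_k(z)(-1)^{z·y} h_{k-1}(z)`, `h_0 = 1`. -/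
noncomputable def hfun (n : ℕ) : ∀ k : ℕ, (Fin k → (Fin n → Bool) → ℝ) → (Fin n → Bool) → ℝ
  | 0, _, _ => 1
  | (k+1), fs, y => ∑ z : Fin n → Bool,
      fs (Fin.last k) z * (-1 : ℝ) ^ ip z y * hfun n k (fun i => fs i.castSucc) z

lemma phiK_eq (k n : ℕ) (fs : Fin k → (Fin n → Bool) → ℝ) :
    phiK k n fs = (∑ x : Fin k → (Fin n → Bool), (∏ i, fs i (x i)) * chainProd k x) /
      Real.sqrt ((2 : ℝ) ^ ((k + 1) * n)) := rfl

/-! ### Orthogonality -/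

lemma ip_add_mod_two {n : ℕ} (z w y : Fin n → Bool) :
    (ip z y + ip w y) % 2 = ip (fun i => xor (z i) (w i)) y % 2 := by
  unfold ip
  rw [← Finset.sum_add_distrib, Finset.sum_nat_mod, Finset.sum_nat_mod
    (f := fun i => ((fun i => xor (z i) (w i)) i && y i).toNat)]
  congr 1
  refine Finset.sum_congr rfl fun i _ => ?_
  simp only []
  cases z i <;> cases w i <;> cases y i <;> rfl

lemma neg_one_ip_mul {n : ℕ} (z w y : Fin n → Bool) :
    (-1 : ℝ) ^ ip z y * (-1 : ℝ) ^ ip w y = (-1 : ℝ) ^ ip (fun i => xor (z i) (w i)) y := by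
  rw [← pow_add, neg_one_pow_eq_pow_mod_two, ip_add_mod_two, ← neg_one_pow_eq_pow_mod_two]

lemma sum_neg_one_ip {n : ℕ} (c : Fin n → Bool) :
    ∑ y : Fin n → Bool, (-1 : ℝ) ^ ip c y
      = if c = fun _ => false then (2 : ℝ) ^ n else 0 := by
  have h1 : ∀ y : Fin n → Bool, (-1 : ℝ) ^ ip c y = ∏ i, (-1 : ℝ) ^ ((c i && y i).toNat) := by
    intro y
    rw [ip, ← Finset.prod_pow_eq_pow_sum]
  simp_rw [h1]
  rw [← Fintype.prod_sum (fun i (b : Bool) => (-1 : ℝ) ^ ((c i && b).toNat))]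
  have h2 : ∀ i, (∑ b : Bool, (-1 : ℝ) ^ ((c i && b).toNat)) = if c i then 0 else 2 := by
    intro i; cases hc : c i <;> simp [Fintype.sum_bool] <;> norm_num
  simp_rw [h2]
  by_cases hc : c = fun _ => false
  · subst hc; simp
  · rw [if_neg hc]
    have : ∃ i, c i = true := by
      by_contra hall
      push_neg at hall
      apply hc
      funext i
      simpa using hall i
    obtain ⟨i, hi⟩ := this
    refine Finset.prod_eq_zero (Finset.mem_univ i) ?_
    rw [hi]
    simp

lemma sum_neg_one_ip_mul {n : ℕ} (z w : Fin n → Bool) :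
    ∑ y : Fin n → Bool, (-1 : ℝ) ^ ip z y * (-1 : ℝ) ^ ip w y
      = if z = w then (2 : ℝ) ^ n else 0 := by
  simp_rw [neg_one_ip_mul]
  rw [sum_neg_one_ip]
  congr 1
  simp only [eq_iff_iff]
  constructor
  · intro h
    funext i
    have h2 := congrFun h i
    revert h2
    cases z i <;> cases w i <;> simp
  · intro h; subst h; funext i; simp

/-! ### Parseval for `hfun` -/

lemma hfun_sq_sum {n : ℕ} : ∀ (k : ℕ) (fs : Fin k → (Fin n → Bool) → ℝ),
    (∀ i z, fs i z = 1 ∨ fs i z = -1) →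
    ∑ y : Fin n → Bool, (hfun n k fs y) ^ 2 = (2 : ℝ) ^ ((k + 1) * n) := by
  intro k
  induction k with
  | zero =>
      intro fs _
      simp [hfun, Finset.card_univ]
  | succ k ih =>
      intro fs hfs
      set g : (Fin n → Bool) → ℝ :=
        fun z => fs (Fin.last k) z * hfun n k (fun i => fs i.castSucc) z with hg
      have hform : ∀ y, hfun n (k+1) fs y = ∑ z : Fin n → Bool, g z * (-1 : ℝ) ^ ip z y := by
        intro y
        rw [hfun]
        exact Finset.sum_congr rfl fun z _ => by rw [hg]; ring
      have key : ∑ y : Fin n → Bool, (hfun n (k+1) fs y) ^ 2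
          = ∑ z : Fin n → Bool, g z * g z * (2 : ℝ) ^ n := by
        simp_rw [hform, sq, Finset.sum_mul_sum]
        rw [Finset.sum_comm]
        refine Finset.sum_congr rfl fun z _ => ?_
        rw [Finset.sum_comm]
        have : ∀ w : Fin n → Bool,
            (∑ y : Fin n → Bool, g z * (-1:ℝ) ^ ip z y * (g w * (-1:ℝ) ^ ip w y))
              = g z * g w * (if z = w then (2:ℝ)^n else 0) := by
          intro w
          rw [← sum_neg_one_ip_mul z w, Finset.mul_sum]
          exact Finset.sum_congr rfl fun y _ => by ring
        simp_rw [this]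
        simp [Finset.sum_ite_eq]
      rw [key]
      have hgg : ∀ z, g z * g z = (hfun n k (fun i => fs i.castSucc) z) ^ 2 := by
        intro z
        have h1 : (fs (Fin.last k) z) ^ 2 = 1 := by
          rcases hfs (Fin.last k) z with h | h <;> rw [h] <;> norm_num
        have h2 : g z = fs (Fin.last k) z * hfun n k (fun i => fs i.castSucc) z := rfl
        rw [h2]
        linear_combination (hfun n k (fun i => fs i.castSucc) z) ^ 2 * h1
      simp_rw [hgg]
      rw [← Finset.sum_mul, ih (fun i => fs i.castSucc) (fun i z => hfs i.castSucc z)]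
      rw [← pow_add]
      congr 1
      ring

/-! ### Expanding the chain sum -/

lemma chainProd_snoc {n : ℕ} (k : ℕ) (y : Fin (k+1) → Fin n → Bool) (z : Fin n → Bool) :
    chainProd (k+2) (Fin.snoc y z) = chainProd (k+1) y * (-1 : ℝ) ^ ip (y (Fin.last k)) z := by
  have h1 : chainProd (k+2) (Fin.snoc y z)
      = ∏ i : Fin (k+1), (if h : (i : ℕ) + 1 < k + 1
          then (-1 : ℝ) ^ ip (y i) (y ⟨(i : ℕ) + 1, h⟩)
          else (-1 : ℝ) ^ ip (y i) z) := by
    rw [chainProd, Fin.prod_univ_castSucc, dif_neg (by simp), mul_one]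
    refine Finset.prod_congr rfl fun i _ => ?_
    have hi2 : ((i.castSucc : Fin (k+2)) : ℕ) + 1 < k + 2 := by
      simp only [Fin.coe_castSucc]; omega
    rw [dif_pos hi2]
    by_cases h : (i : ℕ) + 1 < k + 1
    · rw [dif_pos h]
      have e1 : (⟨((i.castSucc : Fin (k+2)) : ℕ) + 1, hi2⟩ : Fin (k+2))
          = ((⟨(i : ℕ) + 1, h⟩ : Fin (k+1)).castSucc) := by
        ext; simp
      rw [e1, Fin.snoc_castSucc, Fin.snoc_castSucc]
    · rw [dif_neg h]
      have hik : (i : ℕ) = k := by omega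
      have e1 : (⟨((i.castSucc : Fin (k+2)) : ℕ) + 1, hi2⟩ : Fin (k+2)) = Fin.last (k+1) := by
        ext; simp [hik]
      rw [e1, Fin.snoc_castSucc, Fin.snoc_last]
  rw [h1, Fin.prod_univ_castSucc, dif_neg (by simp)]
  rw [chainProd, Fin.prod_univ_castSucc, dif_neg (by simp), mul_one]
  congr 1
  refine Finset.prod_congr rfl fun j _ => ?_
  have hj : ((j.castSucc : Fin (k+1)) : ℕ) + 1 < k + 1 := by
    simp only [Fin.coe_castSucc]; omega
  rw [dif_pos hj, dif_pos hj]

lemma chain_expand {n : ℕ} : ∀ (k : ℕ) (fs : Fin (k+1) → (Fin n → Bool) → ℝ)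
    (t : (Fin n → Bool) → ℝ),
    ∑ x : Fin (k+1) → (Fin n → Bool),
        (∏ i, fs i (x i)) * chainProd (k+1) x * t (x (Fin.last k))
    = ∑ z : Fin n → Bool, fs (Fin.last k) z * t z * hfun n k (fun i => fs i.castSucc) z := by
  intro k
  induction k with
  | zero =>
      intro fs t
      rw [← (Equiv.funUnique (Fin 1) (Fin n → Bool)).symm.sum_comp]
      refine Finset.sum_congr rfl fun z _ => ?_
      simp [chainProd, hfun, Equiv.funUnique]
  | succ k ih =>
      intro fs t
      rw [← ((Fin.insertNthEquiv (fun _ : Fin (k+2) => (Fin n → Bool))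
        (Fin.last (k+1))).symm.symm).sum_comp, Fintype.sum_prod_type]
      refine Finset.sum_congr rfl fun z _ => ?_
      have hsnoc : ∀ y : Fin (k+1) → (Fin n → Bool),
          (Fin.insertNthEquiv (fun _ : Fin (k+2) => (Fin n → Bool))
            (Fin.last (k+1))).symm.symm (z, y) = Fin.snoc y z := by
        intro y
        simp [Fin.insertNthEquiv, Fin.insertNth_last']
      have H := ih (fun i => fs i.castSucc) (fun w => (-1 : ℝ) ^ ip w z)
      have hterm : ∀ y : Fin (k+1) → (Fin n → Bool),
          (∏ i, fs i ((Fin.snoc y z : Fin (k+2) → (Fin n → Bool)) i))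
              * chainProd (k+2) (Fin.snoc y z)
              * t ((Fin.snoc y z : Fin (k+2) → (Fin n → Bool)) (Fin.last (k+1)))
          = fs (Fin.last (k+1)) z * t z *
              ((∏ i, fs i.castSucc (y i)) * chainProd (k+1) y
                * (-1 : ℝ) ^ ip (y (Fin.last k)) z) := by
        intro y
        rw [Fin.prod_univ_castSucc]
        simp only [Fin.snoc_castSucc, Fin.snoc_last]
        rw [chainProd_snoc]
        ring
      simp_rw [hsnoc, hterm]
      rw [← Finset.mul_sum, H, hfun]

/-- `Σ_{x ∈ {0,1}^n} Φ_{f_1,…,f_{k-1},f_k^{(x)}}² = 1`, where `f_k^{(x)}(z) = f_k(z)(-1)^{z·x}`. -/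
theorem sum_sq_phiK_twisted (k n : ℕ) (hk : 1 ≤ k)
    (fs : Fin k → (Fin n → Bool) → ℝ)
    (hfs : ∀ i x, fs i x = 1 ∨ fs i x = -1) :
    ∑ x : Fin n → Bool,
      (phiK k n (Function.update fs ⟨k - 1, by omega⟩
        (fun z => fs ⟨k - 1, by omega⟩ z * (-1 : ℝ) ^ ip z x))) ^ 2 = 1 := by
  obtain ⟨m, rfl⟩ : ∃ m, k = m + 1 := ⟨k - 1, by omega⟩
  have hidx : (⟨m + 1 - 1, by omega⟩ : Fin (m + 1)) = Fin.last m := by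
    ext; simp
  simp only [hidx]
  have hnum : ∀ x : Fin n → Bool,
      (∑ x' : Fin (m+1) → (Fin n → Bool),
        (∏ i, (Function.update fs (Fin.last m)
            (fun z => fs (Fin.last m) z * (-1 : ℝ) ^ ip z x)) i (x' i)) * chainProd (m+1) x')
      = hfun n (m+1) fs x := by
    intro x
    have hprod : ∀ x' : Fin (m+1) → (Fin n → Bool),
        (∏ i, (Function.update fs (Fin.last m)
            (fun z => fs (Fin.last m) z * (-1 : ℝ) ^ ip z x)) i (x' i))
        = (∏ i, fs i (x' i)) * (-1 : ℝ) ^ ip (x' (Fin.last m)) x := by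
      intro x'
      have hupd : ∀ i : Fin (m+1),
          (Function.update fs (Fin.last m)
            (fun z => fs (Fin.last m) z * (-1 : ℝ) ^ ip z x)) i (x' i)
          = fs i (x' i) * (if i = Fin.last m then (-1 : ℝ) ^ ip (x' i) x else 1) := by
        intro i
        by_cases h : i = Fin.last m
        · subst h; rw [Function.update_self, if_pos rfl]
        · rw [Function.update_of_ne h, if_neg h, mul_one]
      simp_rw [hupd]
      rw [Finset.prod_mul_distrib]
      congr 1
      rw [Finset.prod_ite_eq' Finset.univ (Fin.last m) (fun i => (-1 : ℝ) ^ ip (x' i) x)]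
      simp
    have step1 : (∑ x' : Fin (m+1) → (Fin n → Bool),
        (∏ i, (Function.update fs (Fin.last m)
            (fun z => fs (Fin.last m) z * (-1 : ℝ) ^ ip z x)) i (x' i)) * chainProd (m+1) x')
        = ∑ x' : Fin (m+1) → (Fin n → Bool),
            (∏ i, fs i (x' i)) * chainProd (m+1) x' * (-1 : ℝ) ^ ip (x' (Fin.last m)) x := by
      refine Finset.sum_congr rfl fun x' _ => ?_
      rw [hprod x']; ring
    rw [step1]
    have H := chain_expand m fs (fun w => (-1 : ℝ) ^ ip w x)
    rw [H, hfun]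
  have hs : Real.sqrt ((2 : ℝ) ^ ((m + 1 + 1) * n)) ^ 2 = (2 : ℝ) ^ ((m + 1 + 1) * n) :=
    Real.sq_sqrt (by positivity)
  have hstep : ∀ x : Fin n → Bool,
      (phiK (m+1) n (Function.update fs (Fin.last m)
        (fun z => fs (Fin.last m) z * (-1 : ℝ) ^ ip z x))) ^ 2
      = (hfun n (m+1) fs x) ^ 2 / (2 : ℝ) ^ ((m + 1 + 1) * n) := by
    intro x
    rw [phiK_eq, hnum x, div_pow, hs]
  simp_rw [hstep]
  rw [← Finset.sum_div, hfun_sq_sum (m+1) fs hfs, div_self (by positivity)]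
end

section
/- Let |v_1⟩,…,|v_t⟩ be unit vectors in a real inner product space with |⟨v_i|v_j⟩| ≤ ε for all i ≠ j, and suppose t ≤ 0.1/ε (so ε ≤ 0.1). Let |w_1⟩,…,|w_t⟩ be the orthonormal vectors produced by Gram–Schmidt, i.e. |z_i⟩ = |v_i⟩ − Σ_{j<i} ⟨v_i|w_j⟩|w_j⟩ and |w_i⟩ = β_i|z_i⟩ with β_i = 1/√⟨z_i|z_i⟩. Then for all i > j, |⟨v_i|w_j⟩| ≤ ε + 2jε², and β_i ≤ 1 + 2iε². -/
open Finset

private lemma gs_aux0 (x s : ℝ) (hx : 0 ≤ x) (hxs : x ≤ s) (hs : s ≤ 0.01) :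
    1 ≤ (1 - 1.44*x)*(1 + 2*s)^2 := by
  nlinarith [mul_nonneg hx (le_trans hx hxs), mul_nonneg (sub_nonneg.2 hxs) (le_trans hx hxs),
    sq_nonneg s, mul_nonneg hx hx]

private lemma gs_aux1 (a e : ℝ) (ha : 0 ≤ a) (he : 0 < e) (h : a + e ≤ 0.1) :
    1 ≤ (1 - 1.44*(a*e))*(1 + 2*(a*e+e^2))^2 := by
  have hs : a*e + e^2 ≤ 0.01 := by nlinarith
  have hx : 0 ≤ a*e := mul_nonneg ha he.le
  have hxs : a*e ≤ a*e + e^2 := by nlinarith [sq_nonneg e]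
  exact gs_aux0 _ _ hx hxs hs

private lemma gs_aux2 (a e : ℝ) (ha : 0 ≤ a) (he : 0 < e) (h : a + e ≤ 0.1) :
    (1 + 2*(a*e + e^2)) * (e + 1.44*(a*e)) ≤ e + 2*(a*e + e^2) := by
  nlinarith [mul_nonneg ha he.le, sq_nonneg e, mul_nonneg (mul_nonneg ha he.le) he.le,
    mul_nonneg (mul_nonneg ha ha) (mul_nonneg he.le he.le)]

/-- Gram–Schmidt lemma: if `v_1,…,v_t` are linearly independent unit vectors with pairwise
inner products at most `ε` in absolute value and `t ≤ 0.1/ε`, and `w_j` (resp. `z_j`, `β_j`)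
are the Gram–Schmidt orthonormal vectors (resp. residuals, normalizing constants), then for
`i > j` we have `|⟨v_i, w_j⟩| ≤ ε + 2jε²` and `β_i ≤ 1 + 2iε²` (indices counted from 1). -/
theorem gram_schmidt_lemma {E : Type*} [NormedAddCommGroup E] [InnerProductSpace ℝ E]
    (t : ℕ) (ε : ℝ) (hε : 0 < ε) (ht : (t : ℝ) ≤ 0.1 / ε)
    (v z w : Fin t → E) (β : Fin t → ℝ)
    (hunit : ∀ i, ‖v i‖ = 1)
    (hli : LinearIndependent ℝ v)
    (hip : ∀ i j, i ≠ j → |(inner ℝ (v i) (v j) : ℝ)| ≤ ε)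
    (hz : ∀ i, z i = v i - ∑ j ∈ Finset.univ.filter (fun j => j < i),
      (inner ℝ (v i) (w j) : ℝ) • w j)
    (hpos : ∀ i, (0 : ℝ) < (inner ℝ (z i) (z i) : ℝ))
    (hβ : ∀ i, β i = 1 / Real.sqrt ((inner ℝ (z i) (z i) : ℝ)))
    (hw : ∀ i, w i = β i • z i) :
    ∀ i j : Fin t, j < i →
      |(inner ℝ (v i) (w j) : ℝ)| ≤ ε + 2 * ((j : ℕ) + 1) * ε ^ 2 ∧
      β i ≤ 1 + 2 * ((i : ℕ) + 1) * ε ^ 2 := by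
  classical
  have hε1 : ∀ i : Fin t, ((i : ℕ) : ℝ) * ε + ε ≤ 0.1 := by
    intro i
    have h1 : ((i : ℕ) : ℝ) + 1 ≤ (t : ℝ) := by exact_mod_cast Nat.succ_le_of_lt i.isLt
    have h2 : ((i : ℕ) : ℝ) + 1 ≤ 0.1 / ε := h1.trans ht
    have h3 : (((i : ℕ) : ℝ) + 1) * ε ≤ 0.1 := by
      rw [← le_div_iff₀ hε]; exact h2
    nlinarith
  have hwn : ∀ i : Fin t, (inner ℝ (w i) (w i) : ℝ) = 1 := by
    intro i
    have hp := hpos i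
    rw [hw, real_inner_smul_left, real_inner_smul_right, hβ]
    have hs : Real.sqrt ((inner ℝ (z i) (z i) : ℝ)) ≠ 0 := ne_of_gt (Real.sqrt_pos.2 hp)
    field_simp
    rw [Real.sq_sqrt hp.le]
  have horthzw : ∀ n : ℕ, ∀ i j : Fin t, i.val ≤ n → j < i → (inner ℝ (z i) (w j) : ℝ) = 0 := by
    intro n
    induction n with
    | zero =>
      exact fun i j hi hj => absurd (Fin.lt_def.mp hj) (by omega)
    | succ n ih =>
      intro i j hi hj
      rw [hz, inner_sub_left, sum_inner]
      have hsum : ∑ k ∈ Finset.univ.filter (fun k => k < i),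
          (inner ℝ ((inner ℝ (v i) (w k) : ℝ) • w k) (w j) : ℝ) = (inner ℝ (v i) (w j) : ℝ) := by
        rw [Finset.sum_eq_single j]
        · rw [real_inner_smul_left, hwn j, mul_one]
        · intro k hk hkj
          have hki : k < i := (Finset.mem_filter.1 hk).2
          have hww : (inner ℝ (w k) (w j) : ℝ) = 0 := by
            rcases lt_or_gt_of_ne hkj with h | h
            · have hjn : j.val ≤ n := by
                have := Fin.lt_def.mp hj; omega
              rw [real_inner_comm, hw j, real_inner_smul_left, ih j k hjn h, mul_zero]
            · have hkn : k.val ≤ n := by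
                have := Fin.lt_def.mp hki; omega
              rw [hw k, real_inner_smul_left, ih k j hkn h, mul_zero]
          rw [real_inner_smul_left, hww, mul_zero]
        · intro hj'
          simp only [Finset.mem_filter, Finset.mem_univ, true_and] at hj'
          exact absurd hj hj'
      rw [hsum, sub_self]
  have hzw : ∀ i j : Fin t, j < i → (inner ℝ (z i) (w j) : ℝ) = 0 :=
    fun i j h => horthzw i.val i j le_rfl h
  have hsip : ∀ i : Fin t, (inner ℝ (z i) (z i) : ℝ) =
      1 - ∑ j ∈ Finset.univ.filter (fun j => j < i), ((inner ℝ (v i) (w j) : ℝ)) ^ 2 := by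
    intro i
    have h1 : (inner ℝ (z i) (z i) : ℝ) = (inner ℝ (z i) (v i) : ℝ) := by
      nth_rewrite 2 [hz i]
      rw [inner_sub_right, inner_sum, Finset.sum_eq_zero, sub_zero]
      intro j hj
      rw [real_inner_smul_right, hzw i j (Finset.mem_filter.1 hj).2, mul_zero]
    rw [h1, hz, inner_sub_left, sum_inner]
    have h2 : (inner ℝ (v i) (v i) : ℝ) = 1 := by
      rw [real_inner_self_eq_norm_sq, hunit]; norm_num
    rw [h2]
    congr 1
    apply Finset.sum_congr rfl
    intro j hj
    rw [real_inner_smul_left, real_inner_comm (w j) (v i), sq]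
  have hβpos : ∀ i : Fin t, 0 < β i := by
    intro i
    rw [hβ]
    exact one_div_pos.2 (Real.sqrt_pos.2 (hpos i))
  have hcard : ∀ j : Fin t, (Finset.univ.filter (fun k => k < j)).card = j.val := by
    intro j
    rw [show (Finset.univ.filter (fun k => k < j)) = Finset.Iio j by ext k; simp, Fin.card_Iio]
  have key : ∀ n : ℕ, ∀ j : Fin t, j.val ≤ n →
      (β j ≤ 1 + 2 * ((j : ℕ) + 1) * ε ^ 2) ∧
      ∀ i : Fin t, j < i → |(inner ℝ (v i) (w j) : ℝ)| ≤ ε + 2 * ((j : ℕ) + 1) * ε ^ 2 := by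
    intro n
    induction n using Nat.strong_induction_on with
    | _ n ih =>
    intro j hj
    have hsimple : ∀ k i : Fin t, k < j → k < i → |(inner ℝ (v i) (w k) : ℝ)| ≤ 1.2 * ε := by
      intro k i hk hki
      have hkn : k.val < n := lt_of_lt_of_le (Fin.lt_def.mp hk) hj
      have h1 := (ih k.val hkn k le_rfl).2 i hki
      have h2 := hε1 k
      have hknn : (0:ℝ) ≤ ((k : ℕ) : ℝ) := Nat.cast_nonneg _
      nlinarith
    have hjε := hε1 j
    have hjnn : (0:ℝ) ≤ ((j : ℕ) : ℝ) := Nat.cast_nonneg _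
    have hsum : ∑ k ∈ Finset.univ.filter (fun k => k < j), ((inner ℝ (v j) (w k) : ℝ)) ^ 2
        ≤ ((j : ℕ) : ℝ) * (1.44 * ε ^ 2) := by
      have hb : ∀ k ∈ Finset.univ.filter (fun k => k < j),
          ((inner ℝ (v j) (w k) : ℝ)) ^ 2 ≤ 1.44 * ε ^ 2 := by
        intro k hk
        have hkj : k < j := (Finset.mem_filter.1 hk).2
        have h := hsimple k j hkj hkj
        have h0 := abs_nonneg ((inner ℝ (v j) (w k) : ℝ))
        nlinarith [sq_abs ((inner ℝ (v j) (w k) : ℝ))]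
      have := Finset.sum_le_card_nsmul _ _ _ hb
      rw [hcard j] at this
      simpa [nsmul_eq_mul] using this
    have hs1 : 1 - 1.44 * ((j : ℕ) : ℝ) * ε ^ 2 ≤ (inner ℝ (z j) (z j) : ℝ) := by
      rw [hsip]; nlinarith
    have hBj : β j ≤ 1 + 2 * (((j : ℕ) : ℝ) + 1) * ε ^ 2 := by
      have hM : (0:ℝ) < 1 + 2 * (((j : ℕ) : ℝ) + 1) * ε ^ 2 := by positivity
      have haux := gs_aux1 (((j : ℕ) : ℝ) * ε) ε (mul_nonneg hjnn hε.le) hε hjε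
      have hring : (1 - 1.44*((((j : ℕ) : ℝ) * ε)*ε))*(1 + 2*((((j : ℕ) : ℝ) * ε)*ε+ε^2))^2
          = (1 - 1.44 * ((j : ℕ) : ℝ) * ε ^ 2) * (1 + 2 * (((j : ℕ) : ℝ) + 1) * ε ^ 2) ^ 2 := by
        ring
      rw [hring] at haux
      have hsq : (1 / (1 + 2 * (((j : ℕ) : ℝ) + 1) * ε ^ 2)) ^ 2 ≤ (inner ℝ (z j) (z j) : ℝ) := by
        refine le_trans ?_ hs1
        rw [div_pow, one_pow, div_le_iff₀ (by positivity)]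
        nlinarith
      have hsqrt : 1 / (1 + 2 * (((j : ℕ) : ℝ) + 1) * ε ^ 2)
          ≤ Real.sqrt ((inner ℝ (z j) (z j) : ℝ)) := by
        rw [show (1:ℝ) / (1 + 2 * (((j : ℕ) : ℝ) + 1) * ε ^ 2) =
          Real.sqrt ((1 / (1 + 2 * (((j : ℕ) : ℝ) + 1) * ε ^ 2)) ^ 2) by
            rw [Real.sqrt_sq (by positivity)]]
        exact Real.sqrt_le_sqrt hsq
      rw [hβ, div_le_iff₀ (Real.sqrt_pos.2 (hpos j))]
      calc (1:ℝ) = (1 / (1 + 2 * (((j : ℕ) : ℝ) + 1) * ε ^ 2))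
            * (1 + 2 * (((j : ℕ) : ℝ) + 1) * ε ^ 2) := by field_simp
        _ ≤ Real.sqrt ((inner ℝ (z j) (z j) : ℝ)) * (1 + 2 * (((j : ℕ) : ℝ) + 1) * ε ^ 2) :=
            mul_le_mul_of_nonneg_right hsqrt hM.le
        _ = (1 + 2 * (((j : ℕ) : ℝ) + 1) * ε ^ 2) * Real.sqrt ((inner ℝ (z j) (z j) : ℝ)) := by
            ring
    refine ⟨hBj, ?_⟩
    intro i hij
    have hvz : (inner ℝ (v i) (z j) : ℝ) = (inner ℝ (v i) (v j) : ℝ) -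
        ∑ k ∈ Finset.univ.filter (fun k => k < j),
          (inner ℝ (v j) (w k) : ℝ) * (inner ℝ (v i) (w k) : ℝ) := by
      rw [hz j, inner_sub_right, inner_sum]
      congr 1
      apply Finset.sum_congr rfl
      intro k hk
      rw [real_inner_smul_right]
    have hvzb : |(inner ℝ (v i) (z j) : ℝ)| ≤ ε + ((j : ℕ) : ℝ) * (1.44 * ε ^ 2) := by
      rw [hvz]
      refine le_trans (abs_sub _ _) ?_
      have h1 : |(inner ℝ (v i) (v j) : ℝ)| ≤ ε := hip i j (ne_of_gt hij)
      have h2 : ∑ k ∈ Finset.univ.filter (fun k => k < j),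
          |(inner ℝ (v j) (w k) : ℝ) * (inner ℝ (v i) (w k) : ℝ)| ≤ ((j : ℕ) : ℝ) * (1.44 * ε ^ 2) := by
        have hb : ∀ k ∈ Finset.univ.filter (fun k => k < j),
            |(inner ℝ (v j) (w k) : ℝ) * (inner ℝ (v i) (w k) : ℝ)| ≤ 1.44 * ε ^ 2 := by
          intro k hk
          have hkj : k < j := (Finset.mem_filter.1 hk).2
          have ha := hsimple k j hkj hkj
          have hb := hsimple k i hkj (hkj.trans hij)
          rw [abs_mul]
          have h0a := abs_nonneg ((inner ℝ (v j) (w k) : ℝ))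
          have h0b := abs_nonneg ((inner ℝ (v i) (w k) : ℝ))
          nlinarith
        have := Finset.sum_le_card_nsmul _ _ _ hb
        rw [hcard j] at this
        simpa [nsmul_eq_mul] using this
      have h3 := Finset.abs_sum_le_sum_abs
        (fun k => (inner ℝ (v j) (w k) : ℝ) * (inner ℝ (v i) (w k) : ℝ))
        (Finset.univ.filter (fun k => k < j))
      linarith
    have hcij : (inner ℝ (v i) (w j) : ℝ) = β j * (inner ℝ (v i) (z j) : ℝ) := by
      rw [hw j, real_inner_smul_right]
    rw [hcij, abs_mul, abs_of_pos (hβpos j)]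
    have haux2 := gs_aux2 (((j : ℕ) : ℝ) * ε) ε (mul_nonneg hjnn hε.le) hε hjε
    have hring2 : (1 + 2*((((j : ℕ) : ℝ) * ε)*ε + ε^2)) * (ε + 1.44*((((j : ℕ) : ℝ) * ε)*ε))
        = (1 + 2 * (((j : ℕ) : ℝ) + 1) * ε ^ 2) * (ε + ((j : ℕ) : ℝ) * (1.44 * ε ^ 2)) := by ring
    have hring3 : ε + 2*((((j : ℕ) : ℝ) * ε)*ε + ε^2) = ε + 2 * (((j : ℕ) : ℝ) + 1) * ε ^ 2 := by
      ring
    rw [hring2, hring3] at haux2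
    calc β j * |(inner ℝ (v i) (z j) : ℝ)|
        ≤ (1 + 2 * (((j : ℕ) : ℝ) + 1) * ε ^ 2) * (ε + ((j : ℕ) : ℝ) * (1.44 * ε ^ 2)) :=
          mul_le_mul hBj hvzb (abs_nonneg _) (by positivity)
      _ ≤ ε + 2 * (((j : ℕ) : ℝ) + 1) * ε ^ 2 := haux2
  intro i j hij
  exact ⟨(key j.val j le_rfl).2 i hij, (key i.val i le_rfl).1⟩
end

section
/- Under the hypotheses of the Gram–Schmidt lemma (unit vectors with pairwise inner products at most ε in absolute value and t ≤ 0.1/ε), the Gram–Schmidt residuals satisfy 1 − ⟨z_i|z_i⟩ ≤ 1.5·i·ε² for all i, where |z_i⟩ = |v_i⟩ − Σ_{j<i} ⟨v_i|w_j⟩|w_j⟩. -/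
open Finset

set_option maxHeartbeats 1000000 in
/-- Under the hypotheses of the Gram–Schmidt lemma, the Gram–Schmidt residuals satisfy
`1 − ⟨z_i, z_i⟩ ≤ 1.5·i·ε²` for all `i` (indices counted from 1). -/
theorem gram_schmidt_residuals {E : Type*} [NormedAddCommGroup E] [InnerProductSpace ℝ E]
    (t : ℕ) (ε : ℝ) (hε : 0 < ε) (ht : (t : ℝ) ≤ 0.1 / ε)
    (v z w : Fin t → E) (β : Fin t → ℝ)
    (hunit : ∀ i, ‖v i‖ = 1)
    (hli : LinearIndependent ℝ v)
    (hip : ∀ i j, i ≠ j → |(inner ℝ (v i) (v j) : ℝ)| ≤ ε)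
    (hz : ∀ i, z i = v i - ∑ j ∈ Finset.univ.filter (fun j => j < i),
      (inner ℝ (v i) (w j) : ℝ) • w j)
    (hpos : ∀ i, (0 : ℝ) < (inner ℝ (z i) (z i) : ℝ))
    (hβ : ∀ i, β i = 1 / Real.sqrt ((inner ℝ (z i) (z i) : ℝ)))
    (hw : ∀ i, w i = β i • z i) :
    ∀ i : Fin t, 1 - (inner ℝ (z i) (z i) : ℝ) ≤ 1.5 * ((i : ℕ) + 1) * ε ^ 2 := by
  intro i₀
  have htpos : 0 < t := i₀.pos
  have htε : (t : ℝ) * ε ≤ 0.1 := by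
    rw [le_div_iff₀ hε] at ht; linarith
  have hε01 : ε ≤ 0.1 := by
    have h1 : (1 : ℝ) ≤ (t : ℝ) := by exact_mod_cast htpos
    nlinarith
  have hvz : ∀ (u : E) (j : Fin t), (inner ℝ u (z j) : ℝ) =
      (inner ℝ u (v j) : ℝ) - ∑ k ∈ Finset.univ.filter (fun k => k < j),
        (inner ℝ (v j) (w k) : ℝ) * (inner ℝ u (w k) : ℝ) := by
    intro u j
    rw [hz j, inner_sub_right, inner_sum]
    simp [inner_smul_right]
  have hcard : ∀ j : Fin t, (Finset.univ.filter (fun k => k < j)).card = (j : ℕ) := by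
    intro j
    have : Finset.univ.filter (fun k => k < j) = Finset.Iio j := by ext k; simp
    rw [this, Fin.card_Iio]
  have key : ∀ n : ℕ, ∀ j : Fin t, (j : ℕ) = n →
      (∀ k, k < j → (inner ℝ (w j) (w k) : ℝ) = 0) ∧
      (inner ℝ (w j) (w j) : ℝ) = 1 ∧
      (∀ i : Fin t, j < i → |(inner ℝ (v i) (w j) : ℝ)| ≤ 1.2 * ε) ∧
      1 - (inner ℝ (z j) (z j) : ℝ) ≤ 1.44 * (j : ℕ) * ε ^ 2 := by
    intro n
    induction n using Nat.strong_induction_on with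
    | _ n IH =>
      intro j hjn
      have IH' : ∀ k : Fin t, k < j →
          (∀ l, l < k → (inner ℝ (w k) (w l) : ℝ) = 0) ∧
          (inner ℝ (w k) (w k) : ℝ) = 1 ∧
          (∀ i : Fin t, k < i → |(inner ℝ (v i) (w k) : ℝ)| ≤ 1.2 * ε) ∧
          1 - (inner ℝ (z k) (z k) : ℝ) ≤ 1.44 * (k : ℕ) * ε ^ 2 := by
        intro k hk
        refine IH (k : ℕ) ?_ k rfl
        have : (k : ℕ) < (j : ℕ) := hk
        omega
      have hworth : ∀ k l : Fin t, k < j → l < j → k ≠ l →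
          (inner ℝ (w k) (w l) : ℝ) = 0 := by
        intro k l hk hl hkl
        rcases lt_or_gt_of_ne hkl with h | h
        · rw [real_inner_comm]; exact (IH' l hl).1 k h
        · exact (IH' k hk).1 l h
      have hzw : ∀ k, k < j → (inner ℝ (z j) (w k) : ℝ) = 0 := by
        intro k hk
        rw [hz j, inner_sub_left, sum_inner]
        rw [Finset.sum_eq_single k]
        · simp [inner_smul_left, (IH' k hk).2.1]
          rw [← real_inner_self_eq_norm_sq, (IH' k hk).2.1]; ring
        · intro l hl hlk
          simp only [mem_filter] at hl
          simp [inner_smul_left, hworth l k hl.2 hk hlk]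
        · intro h
          simp [mem_filter, hk] at h
      have hzz : (inner ℝ (z j) (z j) : ℝ) = 1 -
          ∑ k ∈ Finset.univ.filter (fun k => k < j), (inner ℝ (v j) (w k) : ℝ) ^ 2 := by
        have h1 : (inner ℝ (z j) (z j) : ℝ) = (inner ℝ (z j) (v j) : ℝ) := by
          have hs0 : ∑ k ∈ Finset.univ.filter (fun k => k < j),
              (inner ℝ (v j) (w k) : ℝ) * (inner ℝ (z j) (w k) : ℝ) = 0 := by
            apply Finset.sum_eq_zero
            intro k hk
            simp only [mem_filter] at hk
            rw [hzw k hk.2, mul_zero]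
          rw [real_inner_comm (z j) (z j)]
          nth_rewrite 1 [hz j]
          rw [inner_sub_left, sum_inner]
          have hs1 : ∑ k ∈ Finset.univ.filter (fun k => k < j),
              (inner ℝ ((inner ℝ (v j) (w k) : ℝ) • w k) (z j) : ℝ) = 0 := by
            apply Finset.sum_eq_zero
            intro k hk
            simp only [mem_filter] at hk
            rw [real_inner_smul_left, real_inner_comm (z j) (w k), hzw k hk.2, mul_zero]
          rw [hs1, sub_zero, real_inner_comm]
        have h2 : (inner ℝ (v j) (v j) : ℝ) = 1 := by
          rw [real_inner_self_eq_norm_sq, hunit]; norm_num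
        rw [h1, real_inner_comm, hvz (v j) j, h2]
        congr 1
        apply Finset.sum_congr rfl
        intro k hk
        ring
      have hδ : 1 - (inner ℝ (z j) (z j) : ℝ) ≤ 1.44 * (j : ℕ) * ε ^ 2 := by
        rw [hzz]
        have hsum : ∑ k ∈ Finset.univ.filter (fun k => k < j), (inner ℝ (v j) (w k) : ℝ) ^ 2
            ≤ ∑ _k ∈ Finset.univ.filter (fun k => k < j), 1.44 * ε ^ 2 := by
          apply Finset.sum_le_sum
          intro k hk
          simp only [mem_filter] at hk
          have hb := (IH' k hk.2).2.2.1 j hk.2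
          have h0 := abs_nonneg ((inner ℝ (v j) (w k) : ℝ))
          nlinarith [sq_abs ((inner ℝ (v j) (w k) : ℝ))]
        rw [Finset.sum_const, hcard j] at hsum
        simp only [nsmul_eq_mul] at hsum
        linarith
      have hjε : ((j : ℕ) : ℝ) * ε ≤ 0.1 := by
        have h1 : ((j : ℕ) : ℝ) ≤ (t : ℝ) := by exact_mod_cast j.2.le
        nlinarith
      have hjnn : (0 : ℝ) ≤ ((j : ℕ) : ℝ) := Nat.cast_nonneg _
      have hsge : (0.9856 : ℝ) ≤ (inner ℝ (z j) (z j) : ℝ) := by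
        nlinarith
      -- w j is a unit vector
      have hwwj : (inner ℝ (w j) (w j) : ℝ) = 1 := by
        have hs := hpos j
        have h2 : Real.sqrt ((inner ℝ (z j) (z j) : ℝ)) * Real.sqrt ((inner ℝ (z j) (z j) : ℝ))
            = (inner ℝ (z j) (z j) : ℝ) := Real.mul_self_sqrt hs.le
        have h3 : Real.sqrt ((inner ℝ (z j) (z j) : ℝ)) ≠ 0 := by positivity
        rw [hw j, real_inner_smul_left, real_inner_smul_right, hβ j]
        field_simp
        rw [Real.sq_sqrt hs.le]
      have hwj0 : ∀ k, k < j → (inner ℝ (w j) (w k) : ℝ) = 0 := by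
        intro k hk
        rw [hw j, real_inner_smul_left, hzw k hk, mul_zero]
      -- part (c)
      have hc : ∀ i : Fin t, j < i → |(inner ℝ (v i) (w j) : ℝ)| ≤ 1.2 * ε := by
        intro i hji
        have hvzb : |(inner ℝ (v i) (z j) : ℝ)| ≤ 1.144 * ε := by
          rw [hvz (v i) j]
          have h1 : |(inner ℝ (v i) (v j) : ℝ)| ≤ ε := hip i j (ne_of_gt hji)
          have h2 : |∑ k ∈ Finset.univ.filter (fun k => k < j),
              (inner ℝ (v j) (w k) : ℝ) * (inner ℝ (v i) (w k) : ℝ)| ≤ 1.44 * (j:ℕ) * ε ^ 2 := by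
            calc |∑ k ∈ Finset.univ.filter (fun k => k < j),
                (inner ℝ (v j) (w k) : ℝ) * (inner ℝ (v i) (w k) : ℝ)|
                ≤ ∑ k ∈ Finset.univ.filter (fun k => k < j),
                  |(inner ℝ (v j) (w k) : ℝ) * (inner ℝ (v i) (w k) : ℝ)| :=
                  Finset.abs_sum_le_sum_abs _ _
              _ ≤ ∑ _k ∈ Finset.univ.filter (fun k => k < j), 1.44 * ε ^ 2 := by
                  apply Finset.sum_le_sum
                  intro k hk
                  simp only [mem_filter] at hk
                  have hb1 := (IH' k hk.2).2.2.1 j hk.2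
                  have hb2 := (IH' k hk.2).2.2.1 i (lt_trans hk.2 hji)
                  rw [abs_mul]
                  have h01 := abs_nonneg ((inner ℝ (v j) (w k) : ℝ))
                  have h02 := abs_nonneg ((inner ℝ (v i) (w k) : ℝ))
                  nlinarith
              _ = 1.44 * (j:ℕ) * ε ^ 2 := by
                  rw [Finset.sum_const, hcard j, nsmul_eq_mul]; ring
          have h3 : 1.44 * (j:ℕ) * ε ^ 2 ≤ 0.144 * ε := by nlinarith
          calc |(inner ℝ (v i) (v j) : ℝ) - ∑ k ∈ Finset.univ.filter (fun k => k < j),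
              (inner ℝ (v j) (w k) : ℝ) * (inner ℝ (v i) (w k) : ℝ)|
              ≤ |(inner ℝ (v i) (v j) : ℝ)| + |∑ k ∈ Finset.univ.filter (fun k => k < j),
                (inner ℝ (v j) (w k) : ℝ) * (inner ℝ (v i) (w k) : ℝ)| := abs_sub _ _
            _ ≤ 1.144 * ε := by linarith
        have hsqrt : (1.144 / 1.2 : ℝ) ≤ Real.sqrt ((inner ℝ (z j) (z j) : ℝ)) := by
          rw [Real.le_sqrt (by norm_num) (le_of_lt (hpos j))]
          nlinarith
        have hsqpos : (0:ℝ) < Real.sqrt ((inner ℝ (z j) (z j) : ℝ)) :=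
          Real.sqrt_pos.2 (hpos j)
        have hβb : β j ≤ 1.2 / 1.144 := by
          rw [hβ j, div_le_div_iff₀ hsqpos (by norm_num)]
          nlinarith
        have hβnn : 0 ≤ β j := by
          rw [hβ j]; positivity
        rw [hw j, real_inner_smul_right, abs_mul, abs_of_nonneg hβnn]
        have := abs_nonneg ((inner ℝ (v i) (z j) : ℝ))
        nlinarith
      exact ⟨hwj0, hwwj, hc, hδ⟩
  have h := (key (i₀ : ℕ) i₀ rfl).2.2.2
  have hjnn : (0 : ℝ) ≤ ((i₀ : ℕ) : ℝ) := Nat.cast_nonneg _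
  nlinarith [sq_nonneg ε]
end

section
/- Suppose x_1, x_2, … form a martingale difference sequence (E[x_i | x_1,…,x_{i−1}] = 0), and conditioned on its predecessors each x_i is dominated by an N(0,σ²) Gaussian in the sense that Pr[|x_i| > σB] < exp(−B²/2) for all B > 0. Then for all c > 0 and all t, Pr[|x_1 + ⋯ + x_t| > cσ√t] < 2·exp(−c²/56). -/
open MeasureTheory ProbabilityTheory

section GaussianAzumaAux
open Filter Real

lemma exp_le_one_add_add_sq {u : ℝ} (hu : u ≤ 1) : Real.exp u ≤ 1 + u + u ^ 2 := by
  rcases le_or_gt (-1) u with h | h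
  · have habs : |u| ≤ 1 := abs_le.2 ⟨h, hu⟩
    have hb := Real.exp_bound habs (by norm_num : 0 < 3)
    have hsum : ∑ i ∈ Finset.range 3, u ^ i / (Nat.factorial i) = 1 + u + u ^ 2 / 2 := by
      norm_num [Finset.sum_range_succ, Nat.factorial]
    rw [hsum] at hb
    have h3 : |u| ^ 3 ≤ u ^ 2 := by
      have : |u| ^ 3 ≤ |u| ^ 2 := pow_le_pow_of_le_one (abs_nonneg u) habs (by norm_num)
      simpa [sq_abs] using this
    have h4 := (abs_le.1 hb).2
    have h5 : ((Nat.succ 3 : ℕ) : ℝ) / ((Nat.factorial 3 : ℕ) * (3:ℕ)) = 2/9 := by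
      norm_num [Nat.factorial]
    rw [h5] at h4
    nlinarith
  · have h1 : Real.exp u ≤ Real.exp (-1) := Real.exp_le_exp.2 h.le
    have h2 : Real.exp (-1) ≤ 3 / 4 := by
      rw [Real.exp_neg]
      rw [inv_le_iff_one_le_mul₀ (Real.exp_pos 1)]
      nlinarith [Real.add_one_le_exp (1:ℝ)]
    nlinarith [sq_nonneg (u + 1/2)]

lemma exp_sub_le_exp_sq (u : ℝ) : Real.exp u - u ≤ Real.exp (u ^ 2) := by
  rcases le_or_gt (|u|) 1 with h | h
  · have h1 : Real.exp u ≤ 1 + u + u ^ 2 := exp_le_one_add_add_sq (le_trans (le_abs_self u) h)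
    nlinarith [Real.add_one_le_exp (u ^ 2)]
  · have habs : |u| ≤ u ^ 2 := by nlinarith [abs_nonneg u, sq_abs u]
    rcases le_or_gt u 0 with hu | hu
    · have : Real.exp u ≤ 1 := Real.exp_le_one_iff.2 hu
      have h2 : -u ≤ u ^ 2 := (neg_le_abs u).trans habs
      nlinarith [Real.add_one_le_exp (u^2)]
    · have : Real.exp u ≤ Real.exp (u ^ 2) := Real.exp_le_exp.2 ((le_abs_self u).trans habs)
      nlinarith

lemma condexp_le_const_of_tendsto {Ω : Type*} {m m0 : MeasurableSpace Ω} (hm : m ≤ m0)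
    {μ : Measure Ω} [IsFiniteMeasure μ]
    {f : Ω → ℝ} (C : ℝ) {g : ℕ → Ω → ℝ}
    (hgi : ∀ n, Integrable (g n) μ)
    (hle : ∀ n, μ[f|m] ≤ᵐ[μ] fun ω => C + (μ[g n|m]) ω)
    (hg0 : ∀ n, 0 ≤ᵐ[μ] μ[g n|m])
    (hlim : Tendsto (fun n => ∫ ω, g n ω ∂μ) atTop (nhds 0)) :
    μ[f|m] ≤ᵐ[μ] fun _ => C := by
  haveI : SigmaFinite (μ.trim hm) := by
    have : IsFiniteMeasure (μ.trim hm) := isFiniteMeasure_trim hm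
    infer_instance
  set F := μ[f|m] with hF
  have hFmeas : StronglyMeasurable[m] F := stronglyMeasurable_condExp
  set A : ℕ → Set Ω := fun k => {ω | C + 1/(k+1) ≤ F ω} with hA
  have hAmeas : ∀ k, MeasurableSet (A k) := fun k =>
    hm _ (measurableSet_le measurable_const hFmeas.measurable)
  have hAnull : ∀ k, μ (A k) = 0 := by
    intro k
    have hε : (0:ℝ) < 1/(k+1) := by positivity
    have mark : ∀ n, (1/(k+1:ℝ)) * (μ (A k)).toReal ≤ ∫ ω, g n ω ∂μ := by
      intro n
      set r := μ[g n|m] with hr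
      have hrmeas : StronglyMeasurable[m] r := stronglyMeasurable_condExp
      have hsub : A k ≤ᵐ[μ] {ω | 1/(k+1:ℝ) ≤ r ω} := by
        filter_upwards [hle n] with ω hω hmem
        have : C + 1/(k+1) ≤ F ω := hmem
        have : C + 1/(k+1) ≤ C + r ω := le_trans this hω
        show (1/(k+1:ℝ)) ≤ r ω
        exact le_of_add_le_add_left this
      have hmono : μ (A k) ≤ μ {ω | 1/(k+1:ℝ) ≤ r ω} := measure_mono_ae hsub
      have hsmeas : MeasurableSet {ω | 1/(k+1:ℝ) ≤ r ω} :=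
        hm _ (measurableSet_le measurable_const hrmeas.measurable)
      have h1 : (1/(k+1:ℝ)) * (μ {ω | 1/(k+1:ℝ) ≤ r ω}).toReal
          ≤ ∫ ω in {ω | 1/(k+1:ℝ) ≤ r ω}, r ω ∂μ :=
        setIntegral_ge_of_const_le_real hsmeas (measure_ne_top μ _) (fun ω hω => hω)
          integrable_condExp.integrableOn
      have h2 : ∫ ω in {ω | 1/(k+1:ℝ) ≤ r ω}, r ω ∂μ ≤ ∫ ω, r ω ∂μ :=
        setIntegral_le_integral integrable_condExp (hg0 n)
      have h3 : ∫ ω, r ω ∂μ = ∫ ω, g n ω ∂μ := integral_condExp hm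
      have h4 : (μ (A k)).toReal ≤ (μ {ω | 1/(k+1:ℝ) ≤ r ω}).toReal :=
        ENNReal.toReal_mono (measure_ne_top μ _) hmono
      calc (1/(k+1:ℝ)) * (μ (A k)).toReal
          ≤ (1/(k+1:ℝ)) * (μ {ω | 1/(k+1:ℝ) ≤ r ω}).toReal := by
            exact mul_le_mul_of_nonneg_left h4 hε.le
        _ ≤ ∫ ω in {ω | 1/(k+1:ℝ) ≤ r ω}, r ω ∂μ := h1
        _ ≤ ∫ ω, r ω ∂μ := h2
        _ = ∫ ω, g n ω ∂μ := h3
    have hle0 : (1/(k+1:ℝ)) * (μ (A k)).toReal ≤ 0 := ge_of_tendsto' hlim mark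
    have : (μ (A k)).toReal = 0 := by
      nlinarith [ENNReal.toReal_nonneg (a := μ (A k))]
    exact (ENNReal.toReal_eq_zero_iff _).1 this |>.resolve_right (measure_ne_top μ _)
  have hsub : {ω | ¬ F ω ≤ C} ⊆ ⋃ k, A k := by
    intro ω hω
    have hlt : C < F ω := lt_of_not_ge hω
    obtain ⟨k, hk⟩ := exists_nat_one_div_lt (sub_pos.2 hlt)
    exact Set.mem_iUnion.2 ⟨k, by simp only [A, Set.mem_setOf_eq]; push_cast; linarith⟩
  have : μ {ω | ¬ F ω ≤ C} = 0 :=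
    measure_mono_null hsub (measure_iUnion_null hAnull)
  exact (ae_iff).2 this

lemma integrable_exp_quarter_sq {Ω : Type*} [MeasurableSpace Ω] {μ : Measure Ω}
    [IsProbabilityMeasure μ] {X : Ω → ℝ} (hX : Measurable X)
    (htail : ∀ B : ℝ, 0 < B → μ {ω | B < |X ω|} ≤ ENNReal.ofReal (Real.exp (-B^2/2))) :
    Integrable (fun ω => Real.exp (X ω ^ 2 / 4)) μ := by
  have hmeas : Measurable fun ω => Real.exp (X ω ^ 2 / 4) := by measurability
  refine ⟨hmeas.aestronglyMeasurable, ?_⟩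
  rw [hasFiniteIntegral_iff_ofReal (Filter.Eventually.of_forall fun ω => (Real.exp_pos _).le)]
  set S : ℕ → Set Ω := fun j => {ω | (j + 1 : ℝ) < X ω ^ 2} with hS
  have hSmeas : ∀ j, MeasurableSet (S j) := fun j =>
    measurableSet_lt measurable_const (hX.pow_const 2)
  have hpt : ∀ ω, ENNReal.ofReal (Real.exp (X ω ^ 2 / 4)) ≤
      ENNReal.ofReal (Real.exp (1/4)) +
        ∑' j : ℕ, ENNReal.ofReal (Real.exp ((j + 2 : ℝ)/4)) * (S j).indicator 1 ω := by
    intro ω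
    rcases le_or_gt (X ω ^ 2) 1 with h1 | h1
    · refine le_trans ?_ le_self_add
      exact ENNReal.ofReal_le_ofReal (Real.exp_le_exp.2 (by linarith))
    · set a := X ω ^ 2
      have ha : (0:ℝ) ≤ a := sq_nonneg _
      set n := Nat.ceil a with hn
      have haX : X ω ^ 2 = a := rfl
      have hn2 : 2 ≤ n := by
        rw [hn]
        exact Nat.lt_ceil.2 (by push_cast; linarith)
      have hlt : (n:ℝ) - 1 < a := by
        have := Nat.ceil_lt_add_one ha
        linarith
      have hge : a ≤ (n:ℝ) := Nat.le_ceil a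
      set j := n - 2 with hj
      have hjcast : (j:ℝ) = (n:ℝ) - 2 := by
        rw [hj]
        push_cast [Nat.cast_sub hn2]
        ring
      have hmem : ω ∈ S j := by
        simp only [S, Set.mem_setOf_eq]
        rw [hjcast]; linarith [haX]
      calc ENNReal.ofReal (Real.exp (a / 4))
          ≤ ENNReal.ofReal (Real.exp ((j + 2 : ℝ)/4)) * (S j).indicator 1 ω := by
            rw [Set.indicator_of_mem hmem, Pi.one_apply, mul_one]
            exact ENNReal.ofReal_le_ofReal (Real.exp_le_exp.2 (by rw [hjcast]; linarith [haX]))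
        _ ≤ ∑' i : ℕ, ENNReal.ofReal (Real.exp ((i + 2 : ℝ)/4)) * (S i).indicator 1 ω :=
            ENNReal.le_tsum j
        _ ≤ ENNReal.ofReal (Real.exp (1/4)) + _ := le_add_self
  calc ∫⁻ ω, ENNReal.ofReal (Real.exp (X ω ^ 2 / 4)) ∂μ
      ≤ ∫⁻ ω, (ENNReal.ofReal (Real.exp (1/4)) +
          ∑' j : ℕ, ENNReal.ofReal (Real.exp ((j + 2 : ℝ)/4)) * (S j).indicator 1 ω) ∂μ :=
        lintegral_mono hpt
    _ = ENNReal.ofReal (Real.exp (1/4)) +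
          ∫⁻ ω, ∑' j : ℕ, ENNReal.ofReal (Real.exp ((j + 2 : ℝ)/4)) * (S j).indicator 1 ω ∂μ := by
        rw [lintegral_add_left measurable_const, lintegral_const, measure_univ, mul_one]
    _ = ENNReal.ofReal (Real.exp (1/4)) +
          ∑' j : ℕ, ∫⁻ ω, ENNReal.ofReal (Real.exp ((j + 2 : ℝ)/4)) * (S j).indicator 1 ω ∂μ := by
        rw [lintegral_tsum]
        intro j
        exact (Measurable.aemeasurable (by
          exact Measurable.const_mul ((measurable_one.indicator (hSmeas j))) _))
    _ ≤ ENNReal.ofReal (Real.exp (1/4)) +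
          ∑' j : ℕ, ENNReal.ofReal (Real.exp (-(j:ℝ)/4)) := by
        refine add_le_add_right (ENNReal.tsum_le_tsum fun j => ?_) _
        have h1 : ∫⁻ ω, ENNReal.ofReal (Real.exp ((j + 2 : ℝ)/4)) * (S j).indicator 1 ω ∂μ
            = ENNReal.ofReal (Real.exp ((j + 2 : ℝ)/4)) * μ (S j) := by
          rw [lintegral_const_mul _ (measurable_one.indicator (hSmeas j)),
            lintegral_indicator_one (hSmeas j)]
        rw [h1]
        have hsub : S j ⊆ {ω | Real.sqrt (j+1) < |X ω|} := by
          intro ω hω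
          have hω' : (j + 1 : ℝ) < X ω ^ 2 := hω
          have : Real.sqrt (j+1) < Real.sqrt (X ω ^ 2) :=
            Real.sqrt_lt_sqrt (by positivity) hω'
          simpa [Real.sqrt_sq_eq_abs] using this
        have htail' : μ (S j) ≤ ENNReal.ofReal (Real.exp (-((j:ℝ)+1)/2)) := by
          have hB : (0:ℝ) < Real.sqrt (j+1) := Real.sqrt_pos.2 (by positivity)
          have := htail _ hB
          have hsq : Real.sqrt (j+1) ^ 2 = (j:ℝ)+1 := Real.sq_sqrt (by positivity)
          calc μ (S j) ≤ μ {ω | Real.sqrt (j+1) < |X ω|} := measure_mono hsub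
            _ ≤ ENNReal.ofReal (Real.exp (-(Real.sqrt (j+1))^2/2)) := this
            _ = ENNReal.ofReal (Real.exp (-((j:ℝ)+1)/2)) := by rw [hsq]
        calc ENNReal.ofReal (Real.exp ((j + 2 : ℝ)/4)) * μ (S j)
            ≤ ENNReal.ofReal (Real.exp ((j + 2 : ℝ)/4)) *
                ENNReal.ofReal (Real.exp (-((j:ℝ)+1)/2)) :=
              mul_le_mul_right htail' _
          _ = ENNReal.ofReal (Real.exp ((j + 2 : ℝ)/4) * Real.exp (-((j:ℝ)+1)/2)) := by
              rw [ENNReal.ofReal_mul (Real.exp_pos _).le]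
          _ = ENNReal.ofReal (Real.exp (-(j:ℝ)/4)) := by
              rw [← Real.exp_add]; ring_nf
    _ < ⊤ := by
        refine ENNReal.add_lt_top.2 ⟨ENNReal.ofReal_lt_top, ?_⟩
        have hsummable : Summable fun j : ℕ => Real.exp (-(j:ℝ)/4) := by
          have : ∀ j : ℕ, Real.exp (-(j:ℝ)/4) = (Real.exp (-1/4))^j := by
            intro j
            rw [← Real.exp_nat_mul]; ring_nf
          exact (summable_geometric_of_lt_one (Real.exp_pos _).le
            (Real.exp_lt_one_iff.2 (by norm_num))).congr (fun j => (this j).symm)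
        rw [← ENNReal.ofReal_tsum_of_nonneg (fun j => (Real.exp_pos _).le) hsummable]
        exact ENNReal.ofReal_lt_top

lemma condexp_exp_layercake {Ω : Type*} {m m0 : MeasurableSpace Ω} (hm : m ≤ m0)
    {μ : Measure Ω} [IsProbabilityMeasure μ]
    {Y : Ω → ℝ} (hY : Measurable Y)
    {θ h T : ℝ} (hθ : 0 < θ) (hh : 0 < h)
    (hint : Integrable (fun ω => Real.exp (θ * Y ω)) μ)
    (τ : ℕ → ℝ)
    (hτ : ∀ j : ℕ, μ[Set.indicator {ω | ((j:ℝ)+1) * h < Y ω} (fun _ => (1:ℝ)) | m]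
            ≤ᵐ[μ] fun _ => τ j)
    (hT : ∀ n, ∑ j ∈ Finset.range n,
        (Real.exp (θ * ((j:ℝ)+2) * h) - Real.exp (θ * ((j:ℝ)+1) * h)) * τ j ≤ T) :
    μ[fun ω => Real.exp (θ * Y ω) | m] ≤ᵐ[μ] fun _ => Real.exp (θ * h) + T := by
  set A : ℕ → Set Ω := fun j => {ω | ((j:ℝ)+1) * h < Y ω} with hA
  have hAmeas : ∀ j, MeasurableSet (A j) := fun j => measurableSet_lt measurable_const hY
  set ind : ℕ → Ω → ℝ := fun j => Set.indicator (A j) (fun _ => (1:ℝ)) with hind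
  have hind_meas : ∀ j, Measurable (ind j) := fun j =>
    measurable_const.indicator (hAmeas j)
  have hind_nonneg : ∀ j ω, 0 ≤ ind j ω := fun j ω =>
    Set.indicator_nonneg (fun _ _ => zero_le_one) ω
  have hind_le_one : ∀ j ω, ind j ω ≤ 1 := by
    intro j ω
    by_cases hω : ω ∈ A j <;>
      simp [ind, Set.indicator_of_mem, Set.indicator_of_notMem, hω]
  have hind_int : ∀ j, Integrable (ind j) μ :=
    fun j => (integrable_const (1:ℝ)).indicator (hAmeas j)
  set E : ℕ → ℝ := fun j => Real.exp (θ * ((j:ℝ)+1) * h) with hE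
  set d : ℕ → ℝ := fun j => E (j+1) - E j with hd
  have hdeq : ∀ j : ℕ, d j
      = Real.exp (θ * ((j:ℝ)+2) * h) - Real.exp (θ * ((j:ℝ)+1) * h) := by
    intro j
    have hc : (((j+1:ℕ)):ℝ) + 1 = (j:ℝ) + 2 := by push_cast; ring
    simp only [d, E, hc]
  have hd_nonneg : ∀ j, 0 ≤ d j := by
    intro j
    rw [hdeq j]
    have : θ * ((j:ℝ)+1) * h ≤ θ * ((j:ℝ)+2) * h := by nlinarith
    simpa [sub_nonneg] using Real.exp_le_exp.2 this
  set f : Ω → ℝ := fun ω => Real.exp (θ * Y ω) with hf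
  set g : ℕ → Ω → ℝ := fun n ω => f ω * ind n ω with hg
  have hg_int : ∀ n, Integrable (g n) μ := by
    intro n
    refine hint.mono' ((hY.const_mul θ).exp.mul (hind_meas n)).aestronglyMeasurable ?_
    refine Filter.Eventually.of_forall fun ω => ?_
    have h0 : 0 ≤ f ω * ind n ω := mul_nonneg (Real.exp_pos _).le (hind_nonneg n ω)
    rw [Real.norm_eq_abs, abs_of_nonneg h0]
    calc f ω * ind n ω ≤ f ω * 1 :=
          mul_le_mul_of_nonneg_left (hind_le_one n ω) (Real.exp_pos _).le
      _ = f ω := mul_one _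
  set F : ℕ → Ω → ℝ := fun n ω => Real.exp (θ * h) + ∑ j ∈ Finset.range n, d j * ind j ω
    with hF
  have hF_int : ∀ n, Integrable (F n) μ := fun n =>
    (integrable_const _).add
      (integrable_finset_sum _ (fun j _ => (hind_int j).const_mul (d j)))
  have hpt : ∀ n ω, f ω ≤ F n ω + g n ω := by
    intro n ω
    have hsum_nonneg : 0 ≤ ∑ j ∈ Finset.range n, d j * ind j ω :=
      Finset.sum_nonneg fun j _ => mul_nonneg (hd_nonneg j) (hind_nonneg j ω)
    by_cases hc : ω ∈ A n
    · have hfc : g n ω = f ω := by simp [g, ind, Set.indicator_of_mem hc]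
      rw [hfc]
      have : 0 ≤ F n ω := add_nonneg (Real.exp_pos _).le hsum_nonneg
      linarith
    · have hgz : g n ω = 0 := by simp [g, ind, Set.indicator_of_notMem hc]
      rw [hgz, add_zero]
      have hYle : Y ω ≤ ((n:ℝ)+1) * h := not_lt.1 hc
      by_cases hY1 : Y ω ≤ h
      · have hfle : f ω ≤ Real.exp (θ * h) := Real.exp_le_exp.2 (by nlinarith)
        simp only [F]; linarith
      · push_neg at hY1
        set b := Y ω with hb
        have hbh : 1 < b / h := (one_lt_div hh).2 hY1
        set M := Nat.ceil (b / h) with hM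
        have hM2 : 2 ≤ M := by
          have : 1 < M := Nat.lt_ceil.2 (by push_cast; linarith)
          omega
        have hMlt : ((M:ℝ) - 1) * h < b := by
          have h1 := Nat.ceil_lt_add_one (le_of_lt (lt_trans one_pos hbh))
          have h2 : (M:ℝ) - 1 < b / h := by
            rw [hM]; push_cast at h1 ⊢; linarith
          have h3 := mul_lt_mul_of_pos_right h2 hh
          rw [div_mul_cancel₀ _ (ne_of_gt hh)] at h3
          exact h3
        have hMge : b ≤ (M:ℝ) * h := by
          have h3 : b / h ≤ (M:ℝ) := Nat.le_ceil _
          calc b = (b / h) * h := by field_simp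
            _ ≤ (M:ℝ) * h := mul_le_mul_of_nonneg_right h3 hh.le
        have hMn : M ≤ n + 1 := by
          apply Nat.ceil_le.2
          push_cast
          exact (div_le_iff₀ hh).2 (by linarith)
        set k := M - 2 with hk
        have hkcast : (k:ℝ) = (M:ℝ) - 2 := by
          rw [hk]; push_cast [Nat.cast_sub hM2]; ring
        have hkn : k + 1 ≤ n := by omega
        have hmem : ∀ j ∈ Finset.range (k+1), ind j ω = 1 := by
          intro j hj
          have hjk : (j:ℝ) ≤ (k:ℝ) := by
            exact_mod_cast Nat.lt_succ_iff.1 (Finset.mem_range.1 hj)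
          have hlt : ((j:ℝ)+1) * h < b := by
            have h1 : ((j:ℝ)+1) * h ≤ ((M:ℝ)-1) * h := by nlinarith [hkcast]
            linarith
          simp only [ind, A]
          rw [Set.indicator_of_mem]
          exact hlt
        have htel : ∑ j ∈ Finset.range (k+1), d j = E (k+1) - E 0 :=
          Finset.sum_range_sub E (k+1)
        have hstep : ∑ j ∈ Finset.range (k+1), d j * ind j ω
            ≤ ∑ j ∈ Finset.range n, d j * ind j ω := by
          apply Finset.sum_le_sum_of_subset_of_nonneg
            (Finset.range_subset_range.2 hkn)
          intro j _ _
          exact mul_nonneg (hd_nonneg j) (hind_nonneg j ω)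
        have heq1 : ∑ j ∈ Finset.range (k+1), d j * ind j ω
            = ∑ j ∈ Finset.range (k+1), d j := by
          apply Finset.sum_congr rfl
          intro j hj
          rw [hmem j hj, mul_one]
        have hE0 : E 0 = Real.exp (θ * h) := by
          simp only [E]; norm_num
        have hfE : f ω ≤ E (k+1) := by
          apply Real.exp_le_exp.2
          have hc1 : (((k+1:ℕ)):ℝ) + 1 = (M:ℝ) := by push_cast; linarith [hkcast]
          simp only [E, hc1]
          calc θ * b ≤ θ * ((M:ℝ) * h) := by nlinarith
            _ = θ * (M:ℝ) * h := by ring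
        simp only [F]
        calc f ω ≤ E (k+1) := hfE
          _ = Real.exp (θ * h) + (∑ j ∈ Finset.range (k+1), d j) := by
              rw [htel, hE0]; ring
          _ = Real.exp (θ * h) + ∑ j ∈ Finset.range (k+1), d j * ind j ω := by
              rw [heq1]
          _ ≤ Real.exp (θ * h) + ∑ j ∈ Finset.range n, d j * ind j ω := by
              linarith [hstep]
  -- apply the abstract lemma
  apply condexp_le_const_of_tendsto hm (Real.exp (θ * h) + T) hg_int
  · intro n
    have hτ_all : ∀ᵐ ω ∂μ, ∀ j : ℕ, (μ[ind j|m]) ω ≤ τ j := by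
      rw [ae_all_iff]
      intro j
      exact hτ j
    have hcm : μ[f|m] ≤ᵐ[μ] μ[fun ω => F n ω + g n ω|m] :=
      condExp_mono hint ((hF_int n).add (hg_int n))
        (Filter.Eventually.of_forall (hpt n))
    have h1 : μ[fun ω => F n ω + g n ω|m] =ᵐ[μ] μ[F n|m] + μ[g n|m] :=
      condExp_add (hF_int n) (hg_int n) _
    have h2 : μ[F n|m] =ᵐ[μ]
        fun ω => Real.exp (θ * h) + ∑ j ∈ Finset.range n, d j * (μ[ind j|m]) ω := by
      have hFsplit : F n = (fun _ => Real.exp (θ * h))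
          + ∑ j ∈ Finset.range n, d j • ind j := by
        funext ω
        simp only [F, Pi.add_apply, Finset.sum_apply, Pi.smul_apply, smul_eq_mul]
      rw [hFsplit]
      have hsumint : Integrable (∑ j ∈ Finset.range n, d j • ind j) μ := by
        have hfn : (∑ j ∈ Finset.range n, d j • ind j)
            = fun a => ∑ j ∈ Finset.range n, (d j • ind j) a := by
          funext a; simp
        rw [hfn]
        exact integrable_finset_sum _ (fun j _ => ((hind_int j).smul (d j)))
      have ha : μ[(fun _ => Real.exp (θ * h)) + ∑ j ∈ Finset.range n, d j • ind j|m]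
          =ᵐ[μ] μ[fun _ => Real.exp (θ * h)|m] + μ[∑ j ∈ Finset.range n, d j • ind j|m] :=
        condExp_add (integrable_const _) hsumint _
      have hb : μ[∑ j ∈ Finset.range n, d j • ind j|m]
          =ᵐ[μ] ∑ j ∈ Finset.range n, μ[d j • ind j|m] :=
        condExp_finset_sum (fun j _ => ((hind_int j).smul (d j))) _
      have hcℓ : ∀ j : ℕ, μ[d j • ind j|m] =ᵐ[μ] d j • μ[ind j|m] := fun j =>
        condExp_smul (d j) (ind j) _
      have hc' : ∑ j ∈ Finset.range n, μ[d j • ind j|m]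
          =ᵐ[μ] ∑ j ∈ Finset.range n, d j • μ[ind j|m] := by
        apply eventuallyEq_sum
        intro j _
        exact hcℓ j
      refine ha.trans ?_
      have hconst : μ[fun _ => Real.exp (θ * h)|m] = fun _ => Real.exp (θ * h) :=
        condExp_const hm _
      rw [hconst]
      filter_upwards [hb, hc'] with ω hbω hcω
      simp only [Pi.add_apply, Finset.sum_apply, Pi.smul_apply, smul_eq_mul] at *
      rw [hbω, hcω]
    filter_upwards [hcm, h1, h2, hτ_all] with ω hω1 hω2 hω3 hω4
    have hsum_le : ∑ j ∈ Finset.range n, d j * (μ[ind j|m]) ω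
        ≤ ∑ j ∈ Finset.range n, d j * τ j := by
      apply Finset.sum_le_sum
      intro j _
      exact mul_le_mul_of_nonneg_left (hω4 j) (hd_nonneg j)
    have hsum_le2 : ∑ j ∈ Finset.range n, d j * τ j ≤ T := by
      have := hT n
      calc ∑ j ∈ Finset.range n, d j * τ j
          = ∑ j ∈ Finset.range n,
            (Real.exp (θ * ((j:ℝ)+2) * h) - Real.exp (θ * ((j:ℝ)+1) * h)) * τ j := by
            apply Finset.sum_congr rfl
            intro j _
            rw [hdeq j]
        _ ≤ T := this
    calc (μ[f|m]) ω ≤ (μ[F n|m] + μ[g n|m]) ω := by rw [← hω2]; exact hω1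
      _ = (μ[F n|m]) ω + (μ[g n|m]) ω := rfl
      _ ≤ Real.exp (θ * h) + ∑ j ∈ Finset.range n, d j * τ j + (μ[g n|m]) ω := by
          rw [hω3]; simp only [add_le_add_iff_right]; linarith [hsum_le]
      _ ≤ Real.exp (θ * h) + T + (μ[g n|m]) ω := by linarith [hsum_le2]
  · intro n
    exact condExp_nonneg (Filter.Eventually.of_forall fun ω =>
      mul_nonneg (Real.exp_pos _).le (hind_nonneg n ω))
  · have := tendsto_integral_of_dominated_convergence (F := g) (f := fun _ => (0:ℝ))
      (μ := μ) (bound := f)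
      (fun n => ((hY.const_mul θ).exp.mul (hind_meas n)).aestronglyMeasurable)
      hint
      (fun n => Filter.Eventually.of_forall fun ω => by
        have h0 : 0 ≤ f ω * ind n ω := mul_nonneg (Real.exp_pos _).le (hind_nonneg n ω)
        rw [Real.norm_eq_abs, abs_of_nonneg h0]
        calc f ω * ind n ω ≤ f ω * 1 :=
              mul_le_mul_of_nonneg_left (hind_le_one n ω) (Real.exp_pos _).le
          _ = f ω := mul_one _)
      (Filter.Eventually.of_forall fun ω => by
        have hev : ∀ᶠ n in atTop, g n ω = 0 := by
          rw [eventually_atTop]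
          refine ⟨Nat.ceil (Y ω / h), fun n hn => ?_⟩
          have h1 : Y ω / h ≤ (n:ℝ) := le_trans (Nat.le_ceil _) (by exact_mod_cast hn)
          have h2 : Y ω ≤ (n:ℝ) * h := by
            calc Y ω = (Y ω / h) * h := by field_simp
              _ ≤ (n:ℝ) * h := mul_le_mul_of_nonneg_right h1 hh.le
          have hnm : ω ∉ A n := by
            simp only [A, Set.mem_setOf_eq, not_lt]
            nlinarith
          simp [g, ind, Set.indicator_of_notMem hnm]
        exact Tendsto.congr' (hev.mono fun n hn => hn.symm) tendsto_const_nhds)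
    simpa using this

section numeric

lemma exp_quarter_pow : Real.exp (1/4) ^ 4 = Real.exp 1 := by
  rw [← Real.exp_nat_mul]; norm_num

lemma exp_quarter_ge : (5/4 : ℝ) ≤ Real.exp (1/4) := by
  apply le_of_pow_le_pow_left₀ (n := 4) (by norm_num) (Real.exp_pos _).le
  rw [exp_quarter_pow]
  nlinarith [Real.exp_one_gt_d9]

lemma exp_quarter_le : Real.exp (1/4) ≤ (13/10 : ℝ) := by
  have h4 : Real.exp (1/4) ^ 4 ≤ (13/10:ℝ) ^ 4 := by
    rw [exp_quarter_pow]
    nlinarith [Real.exp_one_lt_d9]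
  exact le_of_pow_le_pow_left₀ (by norm_num) (by norm_num) h4

lemma exp_theta_sub_one_le {θ : ℝ} (hθ : 0 ≤ θ) : Real.exp θ - 1 ≤ θ * Real.exp θ := by
  have h := Real.add_one_le_exp (-θ)
  have h2 : Real.exp (-θ) * Real.exp θ = 1 := by
    rw [← Real.exp_add]; simp
  nlinarith [mul_le_mul_of_nonneg_right h (Real.exp_pos θ).le]

lemma geom_sum_le_real {r : ℝ} (h0 : 0 ≤ r) (h1 : r < 1) (n : ℕ) :
    ∑ j ∈ Finset.range n, r ^ j ≤ (1 - r)⁻¹ := by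
  rw [← tsum_geometric_of_lt_one h0 h1]
  exact Summable.sum_le_tsum _ (fun i _ => pow_nonneg h0 i)
    (summable_geometric_of_lt_one h0 h1)

end numeric

set_option maxHeartbeats 2000000 in
lemma condexp_exp_mgf {Ω : Type*} {m m0 : MeasurableSpace Ω} (hm : m ≤ m0)
    {μ : Measure Ω} [IsProbabilityMeasure μ]
    {X : Ω → ℝ} (hX : Measurable X)
    (hXint : Integrable X μ)
    (hmean : μ[X|m] =ᵐ[μ] 0)
    (hctail : ∀ B : ℝ, 0 < B →
      μ[Set.indicator {ω | B < |X ω|} (fun _ => (1:ℝ)) | m]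
        ≤ᵐ[μ] fun _ => Real.exp (-B^2/2))
    (hisq : Integrable (fun ω => Real.exp (X ω ^ 2 / 4)) μ)
    {l : ℝ} (hl : 0 < l) :
    μ[fun ω => Real.exp (l * X ω)|m] ≤ᵐ[μ] fun _ => Real.exp (13 * l^2) := by
  have hexp_int : ∀ a : ℝ, Integrable (fun ω => Real.exp (a * X ω)) μ := by
    intro a
    refine (hisq.const_mul (Real.exp (a^2))).mono'
      ((hX.const_mul a).exp).aestronglyMeasurable ?_
    refine Filter.Eventually.of_forall fun ω => ?_
    rw [Real.norm_eq_abs, abs_of_nonneg (Real.exp_pos _).le, ← Real.exp_add]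
    apply Real.exp_le_exp.2
    nlinarith [sq_nonneg (a - X ω / 2)]
  have hEq := exp_quarter_ge
  have hEl := exp_quarter_le
  rcases le_or_gt l (1/2) with hsmall | hbig
  · -- small lambda regime
    set θ := l^2 with hθdef
    have hθpos : 0 < θ := by positivity
    have hθle : θ ≤ 1/4 := by nlinarith
    have hsq_int : Integrable (fun ω => Real.exp (θ * X ω ^ 2)) μ := by
      refine hisq.mono' ((hX.pow_const 2).const_mul θ).exp.aestronglyMeasurable ?_
      refine Filter.Eventually.of_forall fun ω => ?_
      rw [Real.norm_eq_abs, abs_of_nonneg (Real.exp_pos _).le]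
      apply Real.exp_le_exp.2
      nlinarith [sq_nonneg (X ω)]
    -- step 1 : condexp of exp(lX) ≤ condexp of exp(θ X²)
    have hstep1 : μ[fun ω => Real.exp (l * X ω)|m]
        ≤ᵐ[μ] μ[fun ω => Real.exp (θ * X ω ^ 2)|m] := by
      have hsub_int : Integrable (fun ω => Real.exp (l * X ω) - l * X ω) μ :=
        (hexp_int l).sub (hXint.const_mul l)
      have he1 : μ[fun ω => Real.exp (l * X ω) - l * X ω|m]
          =ᵐ[μ] μ[fun ω => Real.exp (l * X ω)|m] - μ[fun ω => l * X ω|m] :=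
        condExp_sub (hexp_int l) (hXint.const_mul l) _
      have he2 : μ[fun ω => l * X ω|m] =ᵐ[μ] (0 : Ω → ℝ) := by
        have h3 : (fun ω => l * X ω) = l • X := by funext ω; simp
        rw [h3]
        refine (condExp_smul l X _).trans ?_
        filter_upwards [hmean] with ω hω
        simp only [Pi.smul_apply, smul_eq_mul]
        rw [hω]
        simp
      have hmono : μ[fun ω => Real.exp (l * X ω) - l * X ω|m]
          ≤ᵐ[μ] μ[fun ω => Real.exp (θ * X ω ^ 2)|m] := by
        apply condExp_mono hsub_int hsq_int
        refine Filter.Eventually.of_forall fun ω => ?_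
        have := exp_sub_le_exp_sq (l * X ω)
        have hpow : (l * X ω) ^ 2 = θ * X ω ^ 2 := by rw [hθdef]; ring
        rw [hpow] at this
        exact this
      filter_upwards [he1, he2, hmono] with ω h1 h2 h3
      have : (μ[fun ω => Real.exp (l * X ω)|m]) ω
          = (μ[fun ω => Real.exp (l * X ω) - l * X ω|m]) ω := by
        rw [h1]
        simp only [Pi.sub_apply]
        rw [h2]
        simp
      rw [this]
      exact h3
    -- step 2 : layer cake on X²
    have hlc : μ[fun ω => Real.exp (θ * X ω ^ 2)|m]
        ≤ᵐ[μ] fun _ => Real.exp (θ * 1) + 6 * θ := by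
      have := condexp_exp_layercake hm (μ := μ) (Y := fun ω => X ω ^ 2) (T := 6 * θ)
        (hX.pow_const 2) hθpos (one_pos)
        (by simpa using hsq_int)
        (fun j => Real.exp (-((j:ℝ)+1)/2))
        ?_ ?_
      · simpa using this
      · intro j
        have hB : (0:ℝ) < Real.sqrt ((j:ℝ)+1) := Real.sqrt_pos.2 (by positivity)
        have hc := hctail _ hB
        have hsq : Real.sqrt ((j:ℝ)+1) ^ 2 = (j:ℝ)+1 := Real.sq_sqrt (by positivity)
        have hmono : μ[Set.indicator {ω | ((j:ℝ)+1) * 1 < X ω ^ 2} (fun _ => (1:ℝ))|m]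
            ≤ᵐ[μ] μ[Set.indicator {ω | Real.sqrt ((j:ℝ)+1) < |X ω|} (fun _ => (1:ℝ))|m] := by
          apply condExp_mono
            ((integrable_const (1:ℝ)).indicator
              (measurableSet_lt measurable_const (hX.pow_const 2)))
            ((integrable_const (1:ℝ)).indicator
              (measurableSet_lt measurable_const hX.abs))
          refine Filter.Eventually.of_forall fun ω => ?_
          apply Set.indicator_le_indicator_of_subset
          · intro ω' hω'
            have h5 : ((j:ℝ)+1) * 1 < X ω' ^ 2 := hω'
            have h6 : Real.sqrt ((j:ℝ)+1) < Real.sqrt (X ω' ^ 2) :=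
              Real.sqrt_lt_sqrt (by positivity) (by linarith)
            simpa [Real.sqrt_sq_eq_abs] using h6
          · intro ω'; exact zero_le_one
        refine hmono.trans ?_
        refine hc.trans ?_
        refine Filter.Eventually.of_forall fun ω => ?_
        rw [hsq]
      · intro n
        have hterm : ∀ j ∈ Finset.range n,
            (Real.exp (θ * ((j:ℝ)+2) * 1) - Real.exp (θ * ((j:ℝ)+1) * 1)) *
              Real.exp (-((j:ℝ)+1)/2)
            ≤ (Real.exp θ - 1) * Real.exp (-1/4) ^ (j+1) := by
          intro j _
          have hfac : Real.exp (θ * ((j:ℝ)+2) * 1) - Real.exp (θ * ((j:ℝ)+1) * 1)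
              = Real.exp (θ * ((j:ℝ)+1)) * (Real.exp θ - 1) := by
            rw [mul_sub, ← Real.exp_add]
            rw [mul_one, mul_one, mul_one]
            ring_nf
          rw [hfac]
          have h7 : Real.exp (θ * ((j:ℝ)+1)) * (Real.exp θ - 1) * Real.exp (-((j:ℝ)+1)/2)
              = (Real.exp θ - 1) * (Real.exp (θ * ((j:ℝ)+1)) * Real.exp (-((j:ℝ)+1)/2)) := by
            ring
          rw [h7]
          apply mul_le_mul_of_nonneg_left
          · rw [← Real.exp_add]
            have h8 : Real.exp (-1/4) ^ (j+1) = Real.exp (-(((j:ℝ))+1)/4) := by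
              rw [← Real.exp_nat_mul]
              congr 1
              push_cast
              ring
            rw [h8]
            apply Real.exp_le_exp.2
            have : (0:ℝ) ≤ (j:ℝ) + 1 := by positivity
            nlinarith
          · have := Real.exp_le_exp.2 (le_of_eq (rfl : θ = θ))
            nlinarith [Real.add_one_le_exp θ, hθpos]
        calc ∑ j ∈ Finset.range n,
              (Real.exp (θ * ((j:ℝ)+2) * 1) - Real.exp (θ * ((j:ℝ)+1) * 1)) *
                Real.exp (-((j:ℝ)+1)/2)
            ≤ ∑ j ∈ Finset.range n, (Real.exp θ - 1) * Real.exp (-1/4) ^ (j+1) :=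
              Finset.sum_le_sum hterm
          _ = (Real.exp θ - 1) * (Real.exp (-1/4) * ∑ j ∈ Finset.range n, Real.exp (-1/4) ^ j) := by
              rw [Finset.mul_sum, Finset.mul_sum]
              apply Finset.sum_congr rfl
              intro j _
              rw [pow_succ]
              ring
          _ ≤ (Real.exp θ - 1) * (Real.exp (-1/4) * (1 - Real.exp (-1/4))⁻¹) := by
              apply mul_le_mul_of_nonneg_left
              · apply mul_le_mul_of_nonneg_left
                  (geom_sum_le_real (Real.exp_pos _).le
                    (Real.exp_lt_one_iff.2 (by norm_num)) n)
                  (Real.exp_pos _).le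
              · nlinarith [Real.add_one_le_exp θ, hθpos]
          _ ≤ 6 * θ := by
              have hr_le : Real.exp (-1/4) ≤ 4/5 := by
                rw [show (-1/4 : ℝ) = -(1/4) by norm_num, Real.exp_neg]
                rw [inv_le_comm₀ (Real.exp_pos _) (by norm_num)]
                linarith
              have hrpos : (0:ℝ) < Real.exp (-1/4) := Real.exp_pos _
              have hinv : (1 - Real.exp (-1/4))⁻¹ ≤ 5 := by
                rw [inv_le_comm₀ (by linarith) (by norm_num)]
                linarith
              have hth : Real.exp θ - 1 ≤ (13/10) * θ := by
                have h1 := exp_theta_sub_one_le hθpos.le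
                have h2 : Real.exp θ ≤ Real.exp (1/4) := Real.exp_le_exp.2 hθle
                nlinarith
              have hth0 : 0 ≤ Real.exp θ - 1 := by
                nlinarith [Real.add_one_le_exp θ]
              have hprod : Real.exp (-1/4) * (1 - Real.exp (-1/4))⁻¹ ≤ 4 := by
                have hinv0 : (0:ℝ) ≤ (1 - Real.exp (-1/4))⁻¹ := by
                  apply inv_nonneg.2; linarith
                nlinarith
              have hprod0 : 0 ≤ Real.exp (-1/4) * (1 - Real.exp (-1/4))⁻¹ := by
                apply mul_nonneg hrpos.le
                apply inv_nonneg.2; linarith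
              nlinarith
    refine hstep1.trans (hlc.trans (Filter.Eventually.of_forall fun ω => ?_))
    show Real.exp (θ * 1) + 6 * θ ≤ Real.exp (13 * l^2)
    have hone : (1:ℝ) ≤ Real.exp θ := Real.one_le_exp hθpos.le
    have h2 : 1 + 6*θ ≤ Real.exp (6*θ) := by
      have := Real.add_one_le_exp (6*θ)
      linarith
    have h3 : Real.exp θ * Real.exp (6*θ) = Real.exp (7*θ) := by
      rw [← Real.exp_add]; ring_nf
    have h4 : Real.exp (7*θ) ≤ Real.exp (13*θ) := Real.exp_le_exp.2 (by nlinarith)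
    have h5 : (13:ℝ) * l^2 = 13 * θ := by rw [hθdef]
    rw [h5]
    calc Real.exp (θ * 1) + 6 * θ = Real.exp θ + 6*θ := by rw [mul_one]
      _ ≤ Real.exp θ * (1 + 6*θ) := by nlinarith
      _ ≤ Real.exp θ * Real.exp (6*θ) := by nlinarith [Real.exp_pos θ]
      _ = Real.exp (7*θ) := h3
      _ ≤ Real.exp (13*θ) := h4
  · -- large lambda regime
    have hl4 : 1 < 4*l^2 := by nlinarith
    have hlc : μ[fun ω => Real.exp (l * X ω)|m]
        ≤ᵐ[μ] fun _ => Real.exp (l * (2*l)) + 3 * Real.exp (2*l^2) := by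
      apply condexp_exp_layercake hm (μ := μ) (Y := X) (T := 3 * Real.exp (2*l^2))
        hX hl (by positivity) (hexp_int l)
        (fun j => Real.exp (-2*((j:ℝ)+1)^2*l^2))
      · intro j
        set B := ((j:ℝ)+1) * (2*l) with hB
        have hBpos : 0 < B := by positivity
        have hc := hctail B hBpos
        have hmono : μ[Set.indicator {ω | ((j:ℝ)+1) * (2*l) < X ω} (fun _ => (1:ℝ))|m]
            ≤ᵐ[μ] μ[Set.indicator {ω | B < |X ω|} (fun _ => (1:ℝ))|m] := by
          apply condExp_mono
            ((integrable_const (1:ℝ)).indicator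
              (measurableSet_lt measurable_const hX))
            ((integrable_const (1:ℝ)).indicator
              (measurableSet_lt measurable_const hX.abs))
          refine Filter.Eventually.of_forall fun ω => ?_
          apply Set.indicator_le_indicator_of_subset
          · intro ω' hω'
            have h5 : B < X ω' := hω'
            exact lt_of_lt_of_le h5 (le_abs_self _)
          · intro ω'; exact zero_le_one
        refine hmono.trans (hc.trans (Filter.Eventually.of_forall fun ω => ?_))
        apply le_of_eq
        congr 1
        rw [hB]
        ring
      · intro n
        have hterm : ∀ j ∈ Finset.range n,
            (Real.exp (l * ((j:ℝ)+2) * (2*l)) - Real.exp (l * ((j:ℝ)+1) * (2*l))) *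
              Real.exp (-2*((j:ℝ)+1)^2*l^2)
            ≤ Real.exp (2*l^2) * Real.exp (-1) ^ j := by
          intro j _
          have h1 : (Real.exp (l * ((j:ℝ)+2) * (2*l)) - Real.exp (l * ((j:ℝ)+1) * (2*l))) *
              Real.exp (-2*((j:ℝ)+1)^2*l^2)
              ≤ Real.exp (l * ((j:ℝ)+2) * (2*l)) * Real.exp (-2*((j:ℝ)+1)^2*l^2) := by
            apply mul_le_mul_of_nonneg_right _ (Real.exp_pos _).le
            nlinarith [Real.exp_pos (l * ((j:ℝ)+1) * (2*l))]
          refine h1.trans ?_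
          rw [← Real.exp_add]
          have h8 : Real.exp (2*l^2) * Real.exp (-1) ^ j
              = Real.exp (2*l^2 + (j:ℝ) * (-1)) := by
            rw [← Real.exp_nat_mul, ← Real.exp_add]
          rw [h8]
          apply Real.exp_le_exp.2
          have hj0 : (0:ℝ) ≤ (j:ℝ) := Nat.cast_nonneg j
          have key : (j:ℝ) ≤ 2*l^2*(j:ℝ)*((j:ℝ)+1) := by
            rcases Nat.eq_zero_or_pos j with hj | hj
            · subst hj; push_cast; nlinarith
            · have hj1 : (1:ℝ) ≤ (j:ℝ) := by exact_mod_cast hj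
              have hstep : (1:ℝ) ≤ 2*l^2*((j:ℝ)+1) := by
                nlinarith [mul_nonneg (by linarith : (0:ℝ) ≤ 4*l^2 - 1) (by linarith : (0:ℝ) ≤ (j:ℝ) - 1)]
              calc (j:ℝ) = (j:ℝ) * 1 := by ring
                _ ≤ (j:ℝ) * (2*l^2*((j:ℝ)+1)) := mul_le_mul_of_nonneg_left hstep hj0
                _ = 2*l^2*(j:ℝ)*((j:ℝ)+1) := by ring
          nlinarith [key]
        have hrhalf : Real.exp (-1:ℝ) ≤ 1/2 := by
          rw [show (-1:ℝ) = -(1:ℝ) by norm_num, Real.exp_neg]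
          rw [inv_le_comm₀ (Real.exp_pos _) (by norm_num)]
          nlinarith [Real.exp_one_gt_d9]
        calc ∑ j ∈ Finset.range n,
              (Real.exp (l * ((j:ℝ)+2) * (2*l)) - Real.exp (l * ((j:ℝ)+1) * (2*l))) *
                Real.exp (-2*((j:ℝ)+1)^2*l^2)
            ≤ ∑ j ∈ Finset.range n, Real.exp (2*l^2) * Real.exp (-1) ^ j :=
              Finset.sum_le_sum hterm
          _ = Real.exp (2*l^2) * ∑ j ∈ Finset.range n, Real.exp (-1:ℝ) ^ j := by
              rw [Finset.mul_sum]
          _ ≤ Real.exp (2*l^2) * (1 - Real.exp (-1:ℝ))⁻¹ := by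
              apply mul_le_mul_of_nonneg_left
                (geom_sum_le_real (Real.exp_pos _).le
                  (Real.exp_lt_one_iff.2 (by norm_num)) n)
                (Real.exp_pos _).le
          _ ≤ 3 * Real.exp (2*l^2) := by
              have hinv : (1 - Real.exp (-1:ℝ))⁻¹ ≤ 2 := by
                rw [inv_le_comm₀ (by linarith) (by norm_num)]
                linarith
              calc Real.exp (2*l^2) * (1 - Real.exp (-1:ℝ))⁻¹
                  ≤ Real.exp (2*l^2) * 2 :=
                    mul_le_mul_of_nonneg_left hinv (Real.exp_pos _).le
                _ ≤ 3 * Real.exp (2*l^2) := by nlinarith [Real.exp_pos (2*l^2)]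
    refine hlc.trans (Filter.Eventually.of_forall fun ω => ?_)
    show Real.exp (l * (2*l)) + 3 * Real.exp (2*l^2) ≤ Real.exp (13 * l^2)
    have he2 : (2:ℝ) ≤ Real.exp 1 := by nlinarith [Real.exp_one_gt_d9]
    have hexp2 : (4:ℝ) ≤ Real.exp 2 := by
      have : Real.exp 2 = Real.exp 1 * Real.exp 1 := by
        rw [← Real.exp_add]; norm_num
      nlinarith
    have h11 : Real.exp 2 ≤ Real.exp (11 * l^2) := Real.exp_le_exp.2 (by nlinarith)
    have hsplit : Real.exp (13 * l^2) = Real.exp (2*l^2) * Real.exp (11*l^2) := by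
      rw [← Real.exp_add]; ring_nf
    have hll : l * (2*l) = 2*l^2 := by ring
    rw [hll, hsplit]
    nlinarith [mul_nonneg (by linarith : (0:ℝ) ≤ Real.exp (11*l^2) - 4)
      (Real.exp_pos (2*l^2)).le]

lemma integrable_exp_mul_of_sq {Ω : Type*} [MeasurableSpace Ω] {μ : Measure Ω}
    {X : Ω → ℝ} (hX : Measurable X)
    (hisq : Integrable (fun ω => Real.exp (X ω ^ 2 / 4)) μ) (a : ℝ) :
    Integrable (fun ω => Real.exp (a * X ω)) μ := by
  refine (hisq.const_mul (Real.exp (a^2))).mono'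
    ((hX.const_mul a).exp).aestronglyMeasurable ?_
  refine Filter.Eventually.of_forall fun ω => ?_
  rw [Real.norm_eq_abs, abs_of_nonneg (Real.exp_pos _).le, ← Real.exp_add]
  apply Real.exp_le_exp.2
  nlinarith [sq_nonneg (a - X ω / 2)]

lemma integrable_of_exp_sq {Ω : Type*} [MeasurableSpace Ω] {μ : Measure Ω}
    {X : Ω → ℝ} (hX : Measurable X)
    (hisq : Integrable (fun ω => Real.exp (X ω ^ 2 / 4)) μ) :
    Integrable X μ := by
  refine (hisq.const_mul 2).mono' hX.aestronglyMeasurable ?_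
  refine Filter.Eventually.of_forall fun ω => ?_
  rw [Real.norm_eq_abs]
  nlinarith [Real.add_one_le_exp (X ω ^ 2 / 4), sq_nonneg (|X ω| - 1), sq_abs (X ω)]

lemma gaussian_azuma_one_sided {Ω : Type*} {m0 : MeasurableSpace Ω}
    (μ : Measure Ω) [IsProbabilityMeasure μ]
    (ℱ : Filtration ℕ m0) (x : ℕ → Ω → ℝ) (σ : ℝ) (hσ : 0 < σ)
    (hmeas : ∀ i, StronglyMeasurable[ℱ (i + 1)] (x i))
    (hmd : ∀ i, μ[x i | ℱ i] =ᵐ[μ] 0)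
    (htail : ∀ i, ∀ B : ℝ, 0 < B →
      ∀ᵐ ω ∂μ,
        (μ[Set.indicator {ω' | σ * B < |x i ω'|} (fun _ => (1 : ℝ)) | ℱ i]) ω
          < Real.exp (-B ^ 2 / 2)) :
    ∀ c : ℝ, 0 < c → ∀ t : ℕ, 1 ≤ t →
      (μ {ω | c * σ * Real.sqrt t < ∑ i ∈ Finset.range t, x i ω}).toReal
        ≤ Real.exp (-c ^ 2 / 52) := by
  set X : ℕ → Ω → ℝ := fun i ω => x i ω / σ with hX
  have hxm : ∀ i, Measurable (x i) := fun i =>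
    ((hmeas i).mono (ℱ.le (i+1))).measurable
  have hXm : ∀ i, Measurable (X i) := fun i => (hxm i).div_const σ
  have hsf : ∀ i : ℕ, SigmaFinite (μ.trim (ℱ.le i)) := by
    intro i
    have : IsFiniteMeasure (μ.trim (ℱ.le i)) := isFiniteMeasure_trim _
    infer_instance
  have hset : ∀ i (B : ℝ), {ω | B < |X i ω|} = {ω | σ * B < |x i ω|} := by
    intro i B
    ext ω
    simp only [X, Set.mem_setOf_eq, abs_div, abs_of_pos hσ]
    rw [lt_div_iff₀ hσ, mul_comm]
  have hctail : ∀ i, ∀ B : ℝ, 0 < B →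
      μ[Set.indicator {ω | B < |X i ω|} (fun _ => (1:ℝ))|ℱ i]
        ≤ᵐ[μ] fun _ => Real.exp (-B^2/2) := by
    intro i B hB
    rw [hset i B]
    exact (htail i B hB).mono fun ω h => h.le
  have hmean : ∀ i, μ[X i|ℱ i] =ᵐ[μ] 0 := by
    intro i
    have hXi : X i = σ⁻¹ • x i := by
      funext ω; simp [X, div_eq_inv_mul]
    rw [hXi]
    refine (condExp_smul σ⁻¹ (x i) _).trans ?_
    filter_upwards [hmd i] with ω hω
    simp only [Pi.smul_apply, smul_eq_mul]
    rw [hω]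
    simp
  have hutail : ∀ i, ∀ B : ℝ, 0 < B →
      μ {ω | B < |X i ω|} ≤ ENNReal.ofReal (Real.exp (-B^2/2)) := by
    intro i B hB
    haveI := hsf i
    set s := {ω | B < |X i ω|} with hs
    have hsm : MeasurableSet s := measurableSet_lt measurable_const (hXm i).abs
    have h1 : (μ s).toReal = ∫ ω, Set.indicator s (fun _ => (1:ℝ)) ω ∂μ :=
      (integral_indicator_one hsm).symm
    have h2 : ∫ ω, Set.indicator s (fun _ => (1:ℝ)) ω ∂μ
        = ∫ ω, (μ[Set.indicator s (fun _ => (1:ℝ))|ℱ i]) ω ∂μ :=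
      (integral_condExp (ℱ.le i)).symm
    have h3 : ∫ ω, (μ[Set.indicator s (fun _ => (1:ℝ))|ℱ i]) ω ∂μ
        ≤ ∫ _ω, Real.exp (-B^2/2) ∂μ := by
      apply integral_mono_ae integrable_condExp (integrable_const _)
      rw [hs]
      exact hctail i B hB
    have h4 : ∫ _ω, Real.exp (-B^2/2) ∂μ = Real.exp (-B^2/2) := by
      simp [measure_univ]
    have h5 : (μ s).toReal ≤ Real.exp (-B^2/2) := by
      rw [h1, h2]; rw [h4] at h3; exact h3
    calc μ s = ENNReal.ofReal ((μ s).toReal) := (ENNReal.ofReal_toReal (measure_ne_top μ s)).symm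
      _ ≤ ENNReal.ofReal (Real.exp (-B^2/2)) := ENNReal.ofReal_le_ofReal h5
  have hisq : ∀ i, Integrable (fun ω => Real.exp (X i ω ^ 2 / 4)) μ := fun i =>
    integrable_exp_quarter_sq (hXm i) (hutail i)
  have hXint : ∀ i, Integrable (X i) μ := fun i => integrable_of_exp_sq (hXm i) (hisq i)
  have hexpa : ∀ i (a : ℝ), Integrable (fun ω => Real.exp (a * X i ω)) μ := fun i a =>
    integrable_exp_mul_of_sq (hXm i) (hisq i) a
  have hMGF : ∀ i, ∀ l : ℝ, 0 < l →
      μ[fun ω => Real.exp (l * X i ω)|ℱ i] ≤ᵐ[μ] fun _ => Real.exp (13 * l^2) :=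
    fun i l hl => condexp_exp_mgf (ℱ.le i) (hXm i) (hXint i) (hmean i) (hctail i) (hisq i) hl
  set S : ℕ → Ω → ℝ := fun t ω => ∑ i ∈ Finset.range t, X i ω with hS
  have hSmF : ∀ t, Measurable[ℱ t] (S t) := by
    intro t
    apply Finset.measurable_sum
    intro i hi
    have hit : i + 1 ≤ t := Finset.mem_range.1 hi
    exact (((hmeas i).mono (ℱ.mono hit)).measurable).div_const σ
  have hSm : ∀ t, Measurable (S t) := fun t => (hSmF t).mono (ℱ.le t) le_rfl
  have claim : ∀ t : ℕ, ∀ l : ℝ, 0 < l →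
      Integrable (fun ω => Real.exp (l * S t ω)) μ ∧
      (∫ ω, Real.exp (l * S t ω) ∂μ) ≤ Real.exp (13 * l^2 * t) := by
    intro t
    induction t with
    | zero =>
      intro l _
      constructor
      · simp only [S, Finset.range_zero, Finset.sum_empty, mul_zero, Real.exp_zero]
        exact integrable_const 1
      · simp only [S, Finset.range_zero, Finset.sum_empty, mul_zero, Real.exp_zero,
          Nat.cast_zero]
        rw [integral_const]
        simp
    | succ t ih =>
      intro l hl
      haveI := hsf t
      have hkey : (fun ω => Real.exp (l * S (t+1) ω))
          = fun ω => Real.exp (l * S t ω) * Real.exp (l * X t ω) := by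
        funext ω
        rw [← Real.exp_add]
        congr 1
        simp only [S, Finset.sum_range_succ]
        ring
      set f : Ω → ℝ := fun ω => Real.exp (l * S t ω) with hfd
      set g : Ω → ℝ := fun ω => Real.exp (l * X t ω) with hgd
      have hfint : Integrable f μ := (ih l hl).1
      have hf2int : Integrable (fun ω => Real.exp (2*l * S t ω)) μ :=
        (ih (2*l) (by linarith)).1
      have hg2int : Integrable (fun ω => Real.exp (2*l * X t ω)) μ := hexpa t (2*l)
      have hfgint : Integrable (fun ω => f ω * g ω) μ := by
        refine (((hf2int.add hg2int).const_mul (1/2)).mono'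
          (((hSm t).const_mul l).exp.mul ((hXm t).const_mul l).exp).aestronglyMeasurable ?_)
        refine Filter.Eventually.of_forall fun ω => ?_
        have hfg0 : 0 ≤ f ω * g ω := mul_nonneg (Real.exp_pos _).le (Real.exp_pos _).le
        rw [Real.norm_eq_abs, abs_of_nonneg hfg0]
        simp only [Pi.add_apply]
        have hsq1 : f ω * f ω = Real.exp (2*l * S t ω) := by
          rw [← Real.exp_add]; congr 1; ring
        have hsq2 : g ω * g ω = Real.exp (2*l * X t ω) := by
          rw [← Real.exp_add]; congr 1; ring
        nlinarith [sq_nonneg (f ω - g ω)]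
      have hfSM : StronglyMeasurable[ℱ t] f :=
        (((hSmF t).const_mul l).exp).stronglyMeasurable
      have hpull : μ[fun ω => f ω * g ω|ℱ t] =ᵐ[μ] f * μ[g|ℱ t] := by
        have := condExp_mul_of_stronglyMeasurable_left (μ := μ) (g := g) hfSM
          hfgint (hexpa t l)
        exact this
      have hint1 : ∫ ω, f ω * g ω ∂μ = ∫ ω, (μ[fun ω => f ω * g ω|ℱ t]) ω ∂μ :=
        (integral_condExp (ℱ.le t)).symm
      have hint2 : ∫ ω, (μ[fun ω => f ω * g ω|ℱ t]) ω ∂μ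
          = ∫ ω, f ω * (μ[g|ℱ t]) ω ∂μ := by
        apply integral_congr_ae
        filter_upwards [hpull] with ω hω
        rw [hω]; rfl
      have hint3 : ∫ ω, f ω * (μ[g|ℱ t]) ω ∂μ ≤ ∫ ω, f ω * Real.exp (13*l^2) ∂μ := by
        apply integral_mono_ae
        · exact integrable_condExp.congr
            (hpull.trans (Filter.Eventually.of_forall fun ω => rfl))
        · exact hfint.mul_const _
        · filter_upwards [hMGF t l hl] with ω hω
          exact mul_le_mul_of_nonneg_left hω (Real.exp_pos _).le
      have hint4 : ∫ ω, f ω * Real.exp (13*l^2) ∂μ = (∫ ω, f ω ∂μ) * Real.exp (13*l^2) :=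
        integral_mul_const _ _
      have hle : ∫ ω, f ω * g ω ∂μ ≤ Real.exp (13 * l^2 * t) * Real.exp (13*l^2) := by
        rw [hint1, hint2]
        refine le_trans hint3 ?_
        rw [hint4]
        exact mul_le_mul_of_nonneg_right (ih l hl).2 (Real.exp_pos _).le
      constructor
      · rw [hkey]; exact hfgint
      · rw [hkey]
        calc ∫ ω, f ω * g ω ∂μ ≤ Real.exp (13 * l^2 * t) * Real.exp (13*l^2) := hle
          _ = Real.exp (13 * l^2 * (t+1:ℕ)) := by
              rw [← Real.exp_add]; congr 1; push_cast; ring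
  -- Markov / Chernoff step
  intro c hc t ht
  have htpos : (0:ℝ) < Real.sqrt t := Real.sqrt_pos.2 (by exact_mod_cast Nat.lt_of_lt_of_le zero_lt_one ht)
  set l : ℝ := c / (26 * Real.sqrt t) with hldef
  have hlpos : 0 < l := by positivity
  have hsumeq : ∀ ω, (∑ i ∈ Finset.range t, x i ω) = σ * S t ω := by
    intro ω
    rw [Finset.mul_sum]
    apply Finset.sum_congr rfl
    intro i _
    rw [mul_div_cancel₀]
    exact ne_of_gt hσ
  have hseteq : {ω | c * σ * Real.sqrt t < ∑ i ∈ Finset.range t, x i ω}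
      = {ω | c * Real.sqrt t < S t ω} := by
    ext ω
    simp only [Set.mem_setOf_eq, hsumeq ω]
    constructor
    · intro h; nlinarith
    · intro h; nlinarith
  rw [hseteq]
  set A := {ω | c * Real.sqrt t < S t ω} with hA
  have hAm : MeasurableSet A := measurableSet_lt measurable_const (hSm t)
  have hmark : Real.exp (l * (c * Real.sqrt t)) * (μ A).toReal
      ≤ ∫ ω, Real.exp (l * S t ω) ∂μ := by
    calc Real.exp (l * (c * Real.sqrt t)) * (μ A).toReal
        ≤ ∫ ω in A, Real.exp (l * S t ω) ∂μ := by
          apply setIntegral_ge_of_const_le_real hAm (measure_ne_top μ _)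
          · intro ω hω
            apply Real.exp_le_exp.2
            exact mul_le_mul_of_nonneg_left (le_of_lt hω) hlpos.le
          · exact (claim t l hlpos).1.integrableOn
      _ ≤ ∫ ω, Real.exp (l * S t ω) ∂μ :=
          setIntegral_le_integral (claim t l hlpos).1
            (Filter.Eventually.of_forall fun ω => (Real.exp_pos _).le)
  have hchain : Real.exp (l * (c * Real.sqrt t)) * (μ A).toReal
      ≤ Real.exp (13 * l^2 * t) := le_trans hmark (claim t l hlpos).2
  have hsqt : Real.sqrt t ^ 2 = (t:ℝ) := Real.sq_sqrt (Nat.cast_nonneg t)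
  have htne : (0:ℝ) < (t:ℝ) := by
    exact_mod_cast Nat.lt_of_lt_of_le zero_lt_one ht
  have hlct : l * (c * Real.sqrt t) = c^2 / 26 := by
    rw [hldef]
    field_simp
  have hl2t : 13 * l^2 * t = c^2 / 52 := by
    have h26 : (26 * Real.sqrt t)^2 = 676 * (t:ℝ) := by
      rw [mul_pow, hsqt]; norm_num
    rw [hldef, div_pow, h26]
    field_simp
    ring
  rw [hlct, hl2t] at hchain
  have hfinal : (μ A).toReal ≤ Real.exp (-c^2/52) := by
    have hepos : 0 < Real.exp (c^2/26) := Real.exp_pos _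
    have h2 : Real.exp (-c^2/52) * Real.exp (c^2/26) = Real.exp (c^2/52) := by
      rw [← Real.exp_add]; congr 1; ring
    nlinarith [hchain, hepos, Real.exp_pos (-c^2/52)]
  exact hfinal

end GaussianAzumaAux

/-- Gaussian Azuma inequality: if `x_0, x_1, …` is a martingale difference sequence
(w.r.t. a filtration `ℱ`, with `x_i` being `ℱ(i+1)`-measurable and `E[x_i | ℱ i] = 0`),
and conditioned on the past each `x_i` is dominated by an `N(0,σ²)` Gaussian in the sense
that `Pr[|x_i| > σB | ℱ i] < exp(−B²/2)` for all `B > 0`, then for every `c > 0` and `t`,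
`Pr[|x_0 + ⋯ + x_{t-1}| > cσ√t] < 2·exp(−c²/56)`. -/
theorem gaussian_azuma {Ω : Type*} {m0 : MeasurableSpace Ω}
    (μ : Measure Ω) [IsProbabilityMeasure μ]
    (ℱ : Filtration ℕ m0) (x : ℕ → Ω → ℝ) (σ : ℝ) (hσ : 0 < σ)
    (hmeas : ∀ i, StronglyMeasurable[ℱ (i + 1)] (x i))
    (hmd : ∀ i, μ[x i | ℱ i] =ᵐ[μ] 0)
    (htail : ∀ i, ∀ B : ℝ, 0 < B →
      ∀ᵐ ω ∂μ,
        (μ[Set.indicator {ω' | σ * B < |x i ω'|} (fun _ => (1 : ℝ)) | ℱ i]) ω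
          < Real.exp (-B ^ 2 / 2)) :
    ∀ c : ℝ, 0 < c → ∀ t : ℕ,
      (μ {ω | c * σ * Real.sqrt t < |∑ i ∈ Finset.range t, x i ω|}).toReal
        < 2 * Real.exp (-c ^ 2 / 56) := by
  intro c hc t
  rcases Nat.eq_zero_or_pos t with ht0 | ht
  · subst ht0
    have hempty : {ω : Ω | c * σ * Real.sqrt ((0:ℕ):ℝ) < |∑ i ∈ Finset.range 0, x i ω|} = ∅ := by
      ext ω
      simp
    rw [hempty]
    simp only [measure_empty, ENNReal.toReal_zero]
    positivity
  · have hone := gaussian_azuma_one_sided μ ℱ x σ hσ hmeas hmd htail c hc t ht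
    have hmone := gaussian_azuma_one_sided μ ℱ (fun i => -x i) σ hσ
      (fun i => (hmeas i).neg)
      (fun i => by
        refine (condExp_neg (x i) _).trans ?_
        filter_upwards [hmd i] with ω hω
        simp only [Pi.neg_apply]
        rw [hω]
        simp)
      (fun i B hB => by
        have hseteq : {ω' | σ * B < |(fun i => -x i) i ω'|} = {ω' | σ * B < |x i ω'|} := by
          ext ω'
          simp [abs_neg]
        rw [hseteq]
        exact htail i B hB)
      c hc t ht
    have hnegset : {ω | c * σ * Real.sqrt t < ∑ i ∈ Finset.range t, (fun i => -x i) i ω}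
        = {ω | c * σ * Real.sqrt t < -∑ i ∈ Finset.range t, x i ω} := by
      ext ω
      simp [Finset.sum_neg_distrib]
    rw [hnegset] at hmone
    set Ap := {ω | c * σ * Real.sqrt t < ∑ i ∈ Finset.range t, x i ω} with hAp
    set An := {ω | c * σ * Real.sqrt t < -∑ i ∈ Finset.range t, x i ω} with hAn
    have hsub : {ω | c * σ * Real.sqrt t < |∑ i ∈ Finset.range t, x i ω|} ⊆ Ap ∪ An := by
      intro ω hω
      have hω' : c * σ * Real.sqrt t < |∑ i ∈ Finset.range t, x i ω| := hω
      have := lt_abs.1 hω'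
      rcases this with h | h
      · exact Or.inl h
      · exact Or.inr h
    have hmu : μ {ω | c * σ * Real.sqrt t < |∑ i ∈ Finset.range t, x i ω|} ≤ μ Ap + μ An :=
      le_trans (measure_mono hsub) (measure_union_le _ _)
    have htor : (μ {ω | c * σ * Real.sqrt t < |∑ i ∈ Finset.range t, x i ω|}).toReal
        ≤ (μ Ap).toReal + (μ An).toReal := by
      calc (μ {ω | c * σ * Real.sqrt t < |∑ i ∈ Finset.range t, x i ω|}).toReal
          ≤ (μ Ap + μ An).toReal := ENNReal.toReal_mono
            (ENNReal.add_ne_top.2 ⟨measure_ne_top μ _, measure_ne_top μ _⟩) hmu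
        _ = (μ Ap).toReal + (μ An).toReal :=
            ENNReal.toReal_add (measure_ne_top μ _) (measure_ne_top μ _)
    have hstrict : Real.exp (-c^2/52) < Real.exp (-c^2/56) := by
      apply Real.exp_lt_exp.2
      have hc2 : 0 < c^2 := by positivity
      nlinarith
    calc (μ {ω | c * σ * Real.sqrt t < |∑ i ∈ Finset.range t, x i ω|}).toReal
        ≤ (μ Ap).toReal + (μ An).toReal := htor
      _ ≤ Real.exp (-c^2/52) + Real.exp (-c^2/52) := add_le_add hone hmone
      _ < 2 * Real.exp (-c^2/56) := by nlinarith
end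

section
/- Let Q be a quantum algorithm making t queries to a Boolean input x ∈ {−1,1}^N, where each query applies the diagonal unitary |i,w⟩ ↦ x_i|i,w⟩. Then there exists a block-multilinear real polynomial p : ℝ^{2tN} → ℝ of degree 2t, with 2t blocks of N variables each, such that (i) the acceptance probability of Q on x equals p(x,…,x) (x repeated in all 2t blocks), and (ii) p(z) ∈ [−1,1] for every z ∈ {−1,1}^{2tN}. -/
open Finset

/-- The state of a quantum query algorithm (with real amplitudes, basis states indexed by
`Fin N × Fin W`) after `j` queries: unitaries `U 0, …, U j` interleaved with the diagonal
query transformation `|i,w⟩ ↦ x_i |i,w⟩`. -/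
noncomputable def runQ (N W : ℕ) (U : ℕ → Matrix (Fin N × Fin W) (Fin N × Fin W) ℝ)
    (x : Fin N → ℝ) (ψ0 : Fin N × Fin W → ℝ) : ℕ → (Fin N × Fin W → ℝ)
  | 0 => (U 0).mulVec ψ0
  | j + 1 => (U (j + 1)).mulVec
      ((Matrix.diagonal (fun p : Fin N × Fin W => x p.1)).mulVec (runQ N W U x ψ0 j))

noncomputable def runV (N W : ℕ) (U : ℕ → Matrix (Fin N × Fin W) (Fin N × Fin W) ℝ)
    (z : ℕ → Fin N → ℝ) (ψ0 : Fin N × Fin W → ℝ) : ℕ → (Fin N × Fin W → ℝ)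
  | 0 => (U 0).mulVec ψ0
  | j + 1 => (U (j + 1)).mulVec
      ((Matrix.diagonal (fun p : Fin N × Fin W => z j p.1)).mulVec (runV N W U z ψ0 j))

lemma runV_const (N W : ℕ) (U : ℕ → Matrix (Fin N × Fin W) (Fin N × Fin W) ℝ)
    (x : Fin N → ℝ) (ψ0 : Fin N × Fin W → ℝ) :
    ∀ j, runV N W U (fun _ => x) ψ0 j = runQ N W U x ψ0 j
  | 0 => rfl
  | j + 1 => by rw [runV, runQ, runV_const]

lemma mulVec_sq_sum {n : Type*} [Fintype n] [DecidableEq n]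
    (A : Matrix n n ℝ) (hA : A ∈ Matrix.orthogonalGroup n ℝ) (v : n → ℝ) :
    ∑ b, (A.mulVec v b) ^ 2 = ∑ b, (v b) ^ 2 := by
  rw [Matrix.mem_orthogonalGroup_iff'] at hA
  have hA2 : ∀ i j, ∑ b, A b i * A b j = if i = j then (1:ℝ) else 0 := by
    intro i j
    have := congrFun (congrFun hA i) j
    simpa [Matrix.mul_apply, Matrix.one_apply, Matrix.conjTranspose_apply,
      mul_comm] using this
  calc ∑ b, (A.mulVec v b) ^ 2
      = ∑ b, ∑ i, ∑ j, (A b i * v i) * (A b j * v j) := by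
        simp [Matrix.mulVec, dotProduct, sq, Finset.sum_mul_sum]
    _ = ∑ i, ∑ j, (v i * v j) * ∑ b, A b i * A b j := by
        rw [Finset.sum_comm]
        refine Finset.sum_congr rfl fun i _ => ?_
        rw [Finset.sum_comm]
        refine Finset.sum_congr rfl fun j _ => ?_
        rw [Finset.mul_sum]
        exact Finset.sum_congr rfl fun b _ => by ring
    _ = ∑ b, (v b) ^ 2 := by
        simp [hA2, sq]

lemma exists_coeff (N W : ℕ) (U : ℕ → Matrix (Fin N × Fin W) (Fin N × Fin W) ℝ)
    (ψ0 : Fin N × Fin W → ℝ) :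
    ∀ t, ∃ c : (Fin N × Fin W) → (Fin t → Fin N) → ℝ,
      ∀ (z : ℕ → Fin N → ℝ) (b : Fin N × Fin W),
        runV N W U z ψ0 t b = ∑ g : Fin t → Fin N, c b g * ∏ j : Fin t, z j (g j) := by
  intro t
  induction t with
  | zero =>
      refine ⟨fun b _ => (U 0).mulVec ψ0 b, fun z b => ?_⟩
      simp [runV]
  | succ t ih =>
      obtain ⟨c, hc⟩ := ih
      refine ⟨fun b g' => ∑ w : Fin W,
        U (t + 1) b (g' (Fin.last t), w) * c (g' (Fin.last t), w) (fun j => g' j.castSucc),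
        fun z b => ?_⟩
      have hdiag : (Matrix.diagonal fun p : Fin N × Fin W => z t p.1).mulVec
          (runV N W U z ψ0 t) = fun b' => z t b'.1 * runV N W U z ψ0 t b' :=
        funext fun b' => Matrix.mulVec_diagonal _ _ _
      have lhs : runV N W U z ψ0 (t + 1) b
          = ∑ i : Fin N, ∑ w : Fin W, ∑ g : Fin t → Fin N,
              U (t + 1) b (i, w) * z t i * (c (i, w) g * ∏ j : Fin t, z j (g j)) := by
        rw [runV, hdiag]
        simp only [Matrix.mulVec, dotProduct]
        rw [Fintype.sum_prod_type]
        refine Finset.sum_congr rfl fun i _ => Finset.sum_congr rfl fun w _ => ?_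
        rw [hc, Finset.mul_sum, Finset.mul_sum]
        exact Finset.sum_congr rfl fun g _ => by ring
      rw [lhs, ← Equiv.sum_comp (Fin.snocEquiv (fun _ => Fin N)), Fintype.sum_prod_type]
      refine Finset.sum_congr rfl fun i _ => ?_
      rw [Finset.sum_comm]
      refine Finset.sum_congr rfl fun g _ => ?_
      rw [Finset.sum_mul]
      refine Finset.sum_congr rfl fun w _ => ?_
      rw [Fin.prod_univ_castSucc]
      simp only [Fin.snocEquiv_apply, Fin.snoc_last, Fin.snoc_castSucc, Fin.val_last,
        Fin.coe_castSucc]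
      ring

lemma runV_norm (t N W : ℕ) (U : ℕ → Matrix (Fin N × Fin W) (Fin N × Fin W) ℝ)
    (hU : ∀ j, j ≤ t → U j ∈ Matrix.orthogonalGroup (Fin N × Fin W) ℝ)
    (ψ0 : Fin N × Fin W → ℝ) (hψ0 : ∑ b : Fin N × Fin W, (ψ0 b) ^ 2 = 1)
    (z : ℕ → Fin N → ℝ) (hz : ∀ n, n < t → ∀ i, (z n i) ^ 2 = 1) :
    ∀ j, j ≤ t → ∑ b, (runV N W U z ψ0 j b) ^ 2 = 1 := by
  intro j
  induction j with
  | zero =>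
      intro _
      rw [runV, mulVec_sq_sum _ (hU 0 (Nat.zero_le _)), hψ0]
  | succ j ih =>
      intro hj
      rw [runV, mulVec_sq_sum _ (hU (j + 1) hj)]
      have h : ∀ b : Fin N × Fin W,
          ((Matrix.diagonal (fun p : Fin N × Fin W => z j p.1)).mulVec
            (runV N W U z ψ0 j) b) ^ 2 = (runV N W U z ψ0 j b) ^ 2 := by
        intro b
        rw [Matrix.mulVec_diagonal, mul_pow, hz j (Nat.lt_of_succ_le hj) b.1, one_mul]
      rw [Finset.sum_congr rfl fun b _ => h b]
      exact ih (Nat.le_of_succ_le hj)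

/-- Every `t`-query quantum algorithm gives rise to a degree-`2t` block-multilinear
polynomial `p` with `2t` blocks of `N` variables each, such that (i) the acceptance
probability on a Boolean input `x` equals `p(x,…,x)`, and (ii) `p(z) ∈ [−1,1]` for every
Boolean `z ∈ {−1,1}^{2tN}`. -/
theorem quantum_algorithm_block_multilinear (t N W : ℕ)
    (U : ℕ → Matrix (Fin N × Fin W) (Fin N × Fin W) ℝ)
    (hU : ∀ j, j ≤ t → U j ∈ Matrix.orthogonalGroup (Fin N × Fin W) ℝ)
    (ψ0 : Fin N × Fin W → ℝ) (hψ0 : ∑ b : Fin N × Fin W, (ψ0 b) ^ 2 = 1)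
    (A : Finset (Fin N × Fin W)) :
    ∃ a : (Fin (2 * t) → Fin N) → ℝ,
      (∀ x : Fin N → ℝ, (∀ i, x i = 1 ∨ x i = -1) →
        ∑ b ∈ A, (runQ N W U x ψ0 t b) ^ 2
          = ∑ f : Fin (2 * t) → Fin N, a f * ∏ j, x (f j)) ∧
      (∀ z : Fin (2 * t) → Fin N → ℝ, (∀ j i, z j i = 1 ∨ z j i = -1) →
        |∑ f : Fin (2 * t) → Fin N, a f * ∏ j, z j (f j)| ≤ 1) := by
  obtain ⟨c, hc⟩ := exists_coeff N W U ψ0 t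
  set e : Fin (2 * t) ≃ Fin t ⊕ Fin t := (finCongr (two_mul t)).trans finSumFinEquiv.symm
    with he
  set E : (Fin t → Fin N) × (Fin t → Fin N) ≃ (Fin (2 * t) → Fin N) :=
    (Equiv.sumArrowEquivProdArrow _ _ _).symm.trans
      (Equiv.arrowCongr e.symm (Equiv.refl (Fin N))) with hE
  have hEl : ∀ (p : (Fin t → Fin N) × (Fin t → Fin N)) (j : Fin t),
      E p (e.symm (Sum.inl j)) = p.1 j := by
    intro p j; simp [hE, Equiv.sumArrowEquivProdArrow]
  have hEr : ∀ (p : (Fin t → Fin N) × (Fin t → Fin N)) (j : Fin t),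
      E p (e.symm (Sum.inr j)) = p.2 j := by
    intro p j; simp [hE, Equiv.sumArrowEquivProdArrow]
  have key : ∀ z : Fin (2 * t) → Fin N → ℝ,
      (∑ f : Fin (2 * t) → Fin N,
          (∑ b ∈ A, c b (fun j => f (e.symm (Sum.inl j)))
            * c b (fun j => f (e.symm (Sum.inr j)))) * ∏ j, z j (f j))
      = ∑ b ∈ A,
          (∑ g : Fin t → Fin N, c b g * ∏ j : Fin t, z (e.symm (Sum.inl j)) (g j))
        * (∑ g : Fin t → Fin N, c b g * ∏ j : Fin t, z (e.symm (Sum.inr j)) (g j)) := by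
    intro z
    have hprod : ∀ p : (Fin t → Fin N) × (Fin t → Fin N),
        ∏ j : Fin (2 * t), z j (E p j)
        = (∏ j : Fin t, z (e.symm (Sum.inl j)) (p.1 j))
          * ∏ j : Fin t, z (e.symm (Sum.inr j)) (p.2 j) := by
      intro p
      rw [← Equiv.prod_comp e.symm (fun j => z j (E p j)), Fintype.prod_sum_type]
      exact congrArg₂ (· * ·)
        (Finset.prod_congr rfl fun j _ => by rw [hEl])
        (Finset.prod_congr rfl fun j _ => by rw [hEr])
    calc (∑ f : Fin (2 * t) → Fin N,
          (∑ b ∈ A, c b (fun j => f (e.symm (Sum.inl j)))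
            * c b (fun j => f (e.symm (Sum.inr j)))) * ∏ j, z j (f j))
        = ∑ p : (Fin t → Fin N) × (Fin t → Fin N),
            ∑ b ∈ A, (c b p.1 * ∏ j : Fin t, z (e.symm (Sum.inl j)) (p.1 j))
              * (c b p.2 * ∏ j : Fin t, z (e.symm (Sum.inr j)) (p.2 j)) := by
          rw [← Equiv.sum_comp E]
          refine Finset.sum_congr rfl fun p _ => ?_
          rw [hprod, Finset.sum_mul]
          refine Finset.sum_congr rfl fun b _ => ?_
          simp only [hEl, hEr]
          ring
      _ = ∑ b ∈ A, ∑ p : (Fin t → Fin N) × (Fin t → Fin N),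
            (c b p.1 * ∏ j : Fin t, z (e.symm (Sum.inl j)) (p.1 j))
              * (c b p.2 * ∏ j : Fin t, z (e.symm (Sum.inr j)) (p.2 j)) :=
          Finset.sum_comm
      _ = _ := by
          refine Finset.sum_congr rfl fun b _ => ?_
          rw [Fintype.sum_prod_type, Finset.sum_mul_sum]
  refine ⟨fun f => ∑ b ∈ A,
    c b (fun j => f (e.symm (Sum.inl j))) * c b (fun j => f (e.symm (Sum.inr j))), ?_, ?_⟩
  · intro x _
    rw [key (fun _ => x)]
    refine Finset.sum_congr rfl fun b _ => ?_
    have h1 := hc (fun _ => x) b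
    rw [runV_const] at h1
    rw [← h1, sq]
  · intro z hz
    have hz1 : ∀ n, n < t → ∀ i,
        ((fun n i => if h : n < t then z (e.symm (Sum.inl ⟨n, h⟩)) i else 1) n i) ^ 2 = 1 := by
      intro n hn i
      simp only [dif_pos hn]
      rcases hz (e.symm (Sum.inl ⟨n, hn⟩)) i with h | h <;> rw [h] <;> norm_num
    have hz2 : ∀ n, n < t → ∀ i,
        ((fun n i => if h : n < t then z (e.symm (Sum.inr ⟨n, h⟩)) i else 1) n i) ^ 2 = 1 := by
      intro n hn i
      simp only [dif_pos hn]
      rcases hz (e.symm (Sum.inr ⟨n, hn⟩)) i with h | h <;> rw [h] <;> norm_num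
    set z1 : ℕ → Fin N → ℝ := fun n i => if h : n < t then z (e.symm (Sum.inl ⟨n, h⟩)) i else 1
    set z2 : ℕ → Fin N → ℝ := fun n i => if h : n < t then z (e.symm (Sum.inr ⟨n, h⟩)) i else 1
    have h1 : ∀ b, (∑ g : Fin t → Fin N, c b g * ∏ j : Fin t, z (e.symm (Sum.inl j)) (g j))
        = runV N W U z1 ψ0 t b := by
      intro b
      rw [hc z1 b]
      refine Finset.sum_congr rfl fun g _ => ?_
      congr 1
      refine Finset.prod_congr rfl fun j _ => ?_
      simp [z1, j.isLt]
    have h2 : ∀ b, (∑ g : Fin t → Fin N, c b g * ∏ j : Fin t, z (e.symm (Sum.inr j)) (g j))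
        = runV N W U z2 ψ0 t b := by
      intro b
      rw [hc z2 b]
      refine Finset.sum_congr rfl fun g _ => ?_
      congr 1
      refine Finset.prod_congr rfl fun j _ => ?_
      simp [z2, j.isLt]
    rw [key z, Finset.sum_congr rfl fun b _ => by rw [h1 b, h2 b]]
    have n1 := runV_norm t N W U hU ψ0 hψ0 z1 hz1 t le_rfl
    have n2 := runV_norm t N W U hU ψ0 hψ0 z2 hz2 t le_rfl
    have cs := Finset.sum_mul_sq_le_sq_mul_sq A (fun b => runV N W U z1 ψ0 t b)
      (fun b => runV N W U z2 ψ0 t b)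
    have le1 : ∑ b ∈ A, (runV N W U z1 ψ0 t b) ^ 2 ≤ 1 := by
      rw [← n1]
      exact Finset.sum_le_sum_of_subset_of_nonneg (Finset.subset_univ A)
        (fun b _ _ => sq_nonneg _)
    have le2 : ∑ b ∈ A, (runV N W U z2 ψ0 t b) ^ 2 ≤ 1 := by
      rw [← n2]
      exact Finset.sum_le_sum_of_subset_of_nonneg (Finset.subset_univ A)
        (fun b _ _ => sq_nonneg _)
    have hsq : (∑ b ∈ A, runV N W U z1 ψ0 t b * runV N W U z2 ψ0 t b) ^ 2 ≤ 1 := by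
      calc (∑ b ∈ A, runV N W U z1 ψ0 t b * runV N W U z2 ψ0 t b) ^ 2
          ≤ (∑ b ∈ A, (runV N W U z1 ψ0 t b) ^ 2) * ∑ b ∈ A, (runV N W U z2 ψ0 t b) ^ 2 := cs
        _ ≤ 1 := by nlinarith [Finset.sum_nonneg (fun b (_ : b ∈ A) => sq_nonneg (runV N W U z1 ψ0 t b))]
    exact (sq_le_one_iff_abs_le_one _).mp hsq
end

section
/- Let f_1,…,f_k : {0,1}^n → {−1,1} with N = 2^n, fix f_1,…,f_{k−1}, and suppose the coefficients α_x := Φ_{f_1,…,f_{k−1}^{(x)}} (so Σ_x α_x² = 1) satisfy |α_x| ≤ (log N)/√N for all x. Then for a uniformly random f_k and any fixed nonzero y ∈ {0,1}^n, the quantity Σ_{z : z·y = 0} Φ_{f_1,…,f_{k−1},f_k^{(z)}}² equals 1/2 + Σ_{x'} α_{0x'} α_{1x'} f_k(0x') f_k(1x') (after reordering coordinates so that y = 10⋯0), and hence Pr_{f_k}[|Σ_{z : z·y=0} Φ_{f_1,…,f_{k−1},f_k^{(z)}}² − 1/2| ≥ t/√N] ≤ 2·exp(−t²/(4·log⁴N)).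 -/
open Finset

/-- The tuple `(f_1, …, f_{k-1}, f_k)` assembled from the first `k−1` functions and `f_k`. -/
def fullTuple (k n : ℕ) (fs : Fin (k - 1) → (Fin n → Bool) → ℝ)
    (fk : (Fin n → Bool) → ℝ) : Fin k → (Fin n → Bool) → ℝ :=
  fun i => if h : (i : ℕ) < k - 1 then fs ⟨i, h⟩ else fk

/-- `α_x = Φ_{f_1,…,f_{k−2},f_{k−1}^{(x)}}`. -/
noncomputable def alphaCoeff (k n : ℕ) (hk : 2 ≤ k)
    (fs : Fin (k - 1) → (Fin n → Bool) → ℝ) (x : Fin n → Bool) : ℝ :=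
  phiK (k - 1) n (Function.update fs ⟨k - 2, by omega⟩
    (fun z => fs ⟨k - 2, by omega⟩ z * (-1 : ℝ) ^ ip z x))

/-- `Φ_{f_1,…,f_{k−1},f_k^{(z)}}`, the k-fold forrelation with `f_k` twisted by `z`. -/
noncomputable def phiTwist (k n : ℕ) (hk : 2 ≤ k)
    (fs : Fin (k - 1) → (Fin n → Bool) → ℝ) (fk : (Fin n → Bool) → ℝ)
    (z : Fin n → Bool) : ℝ :=
  phiK k n (Function.update (fullTuple k n fs fk) ⟨k - 1, by omega⟩
    (fun w => fk w * (-1 : ℝ) ^ ip w z))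

/-- `Σ_{z : z·y = 0} Φ_{f_1,…,f_{k−1},f_k^{(z)}}²` for `y = 10⋯0`, i.e. the sum over all
`z` whose first bit is `0`. -/
noncomputable def halfSum (k n : ℕ) (hk : 2 ≤ k)
    (fs : Fin (k - 1) → (Fin (n + 1) → Bool) → ℝ)
    (fk : (Fin (n + 1) → Bool) → ℝ) : ℝ :=
  ∑ z ∈ Finset.univ.filter (fun z : Fin (n + 1) → Bool => z 0 = false),
    (phiTwist k (n + 1) hk fs fk z) ^ 2


namespace HSaux

variable {d : ℕ}


lemma neg_one_pow_congr {a b : ℕ} (h : a % 2 = b % 2) : ((-1:ℝ))^a = (-1)^b := by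
  rcases Nat.even_or_odd a with ha | ha
  · have hb : Even b := by
      rw [Nat.even_iff] at ha ⊢; omega
    rw [ha.neg_one_pow, hb.neg_one_pow]
  · have hb : Odd b := by
      rw [Nat.odd_iff] at ha ⊢; omega
    rw [ha.neg_one_pow, hb.neg_one_pow]

lemma neg_one_ip_mul {d : ℕ} (w w' x : Fin d → Bool) :
    ((-1:ℝ))^(ip w x) * (-1)^(ip w' x) = (-1)^(ip (fun i => xor (w i) (w' i)) x) := by
  rw [← pow_add]
  refine neg_one_pow_congr ?_
  unfold ip
  rw [← Finset.sum_add_distrib, Finset.sum_nat_mod, Finset.sum_nat_mod (s := univ)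
    (f := fun i => ((xor (w i) (w' i)) && x i).toNat)]
  congr 1
  refine Finset.sum_congr rfl fun i _ => ?_
  cases hw : w i <;> cases hw' : w' i <;> cases hx : x i <;> rfl

lemma sum_neg_one_ip {d : ℕ} (u : Fin d → Bool) :
    ∑ x : Fin d → Bool, ((-1:ℝ))^(ip u x)
      = if u = (fun _ => false) then (2:ℝ)^d else 0 := by
  have : ∀ x : Fin d → Bool, ((-1:ℝ))^(ip u x) = ∏ i, ((-1:ℝ))^((u i && x i).toNat) := by
    intro x; rw [ip, ← Finset.prod_pow_eq_pow_sum]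
  simp_rw [this]
  rw [← Fintype.prod_sum fun (i : Fin d) (b : Bool) => ((-1:ℝ))^((u i && b).toNat)]
  have h1 : ∀ i, (∑ b : Bool, ((-1:ℝ))^((u i && b).toNat)) = if u i = false then 2 else 0 := by
    intro i; cases h : u i <;> simp [h] <;> norm_num
  simp_rw [h1]
  by_cases hu : u = fun _ => false
  · subst hu; simp
  · rw [if_neg hu]
    obtain ⟨i, hi⟩ : ∃ i, u i ≠ false := by
      by_contra h; push_neg at h; exact hu (funext h)
    exact Finset.prod_eq_zero (mem_univ i) (by simp [hi])

lemma xor_eq_false_iff {d : ℕ} (w w' : Fin d → Bool) :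
    ((fun i => xor (w i) (w' i)) = fun _ => false) ↔ w = w' := by
  constructor
  · intro h; funext i
    have := congrFun h i
    cases hw : w i <;> cases hw' : w' i <;> simp_all
  · intro h; subst h; funext i; simp

lemma sum_sq_fourier {d : ℕ} (c : (Fin d → Bool) → ℝ) :
    ∑ x : Fin d → Bool, (∑ w, c w * ((-1:ℝ))^(ip w x))^2
      = 2^d * ∑ w, (c w)^2 := by
  have expand : ∀ x : Fin d → Bool, (∑ w, c w * ((-1:ℝ))^(ip w x))^2
      = ∑ w, ∑ w', c w * c w' * (((-1:ℝ))^(ip w x) * (-1)^(ip w' x)) := by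
    intro x
    rw [sq, Finset.sum_mul_sum]
    refine Finset.sum_congr rfl fun w _ => Finset.sum_congr rfl fun w' _ => by ring
  simp_rw [expand, neg_one_ip_mul]
  rw [Finset.sum_comm]
  have : ∀ w, ∑ x : Fin d → Bool, ∑ w', c w * c w' * ((-1:ℝ))^(ip (fun i => xor (w i) (w' i)) x)
      = 2^d * (c w)^2 := by
    intro w
    rw [Finset.sum_comm]
    have h2 : ∀ w', ∑ x : Fin d → Bool, c w * c w' * ((-1:ℝ))^(ip (fun i => xor (w i) (w' i)) x)
        = c w * c w' * (if w = w' then (2:ℝ)^d else 0) := by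
      intro w'
      rw [← Finset.mul_sum, sum_neg_one_ip]
      simp only [xor_eq_false_iff]
    simp_rw [h2, mul_ite, mul_zero]
    rw [Finset.sum_ite_eq (Finset.univ) w (fun w' => c w * c w' * (2:ℝ)^d)]
    simp [sq]; ring
  simp_rw [this, ← Finset.mul_sum]



noncomputable def chainVec : (j : ℕ) → (Fin j → (Fin d → Bool) → ℝ) → (Fin d → Bool) → ℝ
  | 0, _, _ => 1
  | j+1, fs, w => ∑ v, chainVec j (Fin.init fs) v * fs (Fin.last j) v * ((-1:ℝ))^(ip v w)

lemma phase_eq (k : ℕ) (x : Fin (k+1) → Fin d → Bool) :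
    (∏ i : Fin (k+1), if h : (i:ℕ)+1 < k+1 then
        ((-1:ℝ))^(ip (x i) (x ⟨(i:ℕ)+1, h⟩)) else 1)
    = ∏ i : Fin k, ((-1:ℝ))^(ip (x i.castSucc) (x i.succ)) := by
  rw [Fin.prod_univ_castSucc]
  have hlast : (if h : ((Fin.last k : Fin (k+1)):ℕ)+1 < k+1 then
      ((-1:ℝ))^(ip (x (Fin.last k)) (x ⟨((Fin.last k):ℕ)+1, h⟩)) else 1) = 1 := by
    simp
  rw [hlast, mul_one]
  refine Finset.prod_congr rfl fun i _ => ?_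
  have h1 : ((Fin.castSucc i : Fin (k+1)):ℕ)+1 < k+1 := by
    simpa using i.isLt
  rw [dif_pos h1]
  have h2 : (⟨((Fin.castSucc i : Fin (k+1)):ℕ)+1, h1⟩ : Fin (k+1)) = i.succ := by
    ext; simp
  rw [h2]

lemma chain_sum (j : ℕ) (fs : Fin (j+1) → (Fin d → Bool) → ℝ) :
    ∑ x : Fin (j+1) → (Fin d → Bool),
      (∏ i, fs i (x i)) *
      (∏ i : Fin (j+1), if h : (i:ℕ)+1 < j+1 then ((-1:ℝ))^(ip (x i) (x ⟨(i:ℕ)+1, h⟩)) else 1)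
    = ∑ w, chainVec j (Fin.init fs) w * fs (Fin.last j) w := by
  simp_rw [phase_eq]
  induction j with
  | zero =>
    refine Fintype.sum_equiv (Equiv.funUnique (Fin 1) (Fin d → Bool)) _ _ fun x => ?_
    simp [chainVec]
  | succ j IH =>
    rw [← (Fin.snocEquiv (fun _ : Fin (j+2) => (Fin d → Bool))).sum_comp]
    rw [Fintype.sum_prod_type]
    refine Finset.sum_congr rfl fun w _ => ?_
    set gs : Fin (j+1) → (Fin d → Bool) → ℝ :=
      Function.update (Fin.init fs) (Fin.last j)
        (fun v => Fin.init fs (Fin.last j) v * ((-1:ℝ))^(ip v w)) with hgs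
    have step : ∀ x' : Fin (j+1) → (Fin d → Bool),
        (∏ i : Fin (j+2), fs i ((Fin.snocEquiv (fun _ : Fin (j+2) => (Fin d → Bool))) (w, x') i)) *
        (∏ i : Fin (j+1), ((-1:ℝ))^(ip
            ((Fin.snocEquiv (fun _ : Fin (j+2) => (Fin d → Bool))) (w, x') i.castSucc)
            ((Fin.snocEquiv (fun _ : Fin (j+2) => (Fin d → Bool))) (w, x') i.succ)))
        = ((∏ i, gs i (x' i)) * (∏ i : Fin j, ((-1:ℝ))^(ip (x' i.castSucc) (x' i.succ))))
          * fs (Fin.last (j+1)) w := by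
      intro x'
      have e1 : (∏ i : Fin (j+2), fs i ((Fin.snocEquiv (fun _ : Fin (j+2) => (Fin d → Bool))) (w, x') i))
          = (∏ i : Fin (j+1), Fin.init fs i (x' i)) * fs (Fin.last (j+1)) w := by
        rw [Fin.prod_univ_castSucc]
        simp [Fin.snocEquiv, Fin.init]
      have e2 : (∏ i : Fin (j+1), ((-1:ℝ))^(ip
            ((Fin.snocEquiv (fun _ : Fin (j+2) => (Fin d → Bool))) (w, x') i.castSucc)
            ((Fin.snocEquiv (fun _ : Fin (j+2) => (Fin d → Bool))) (w, x') i.succ)))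
          = (∏ i : Fin j, ((-1:ℝ))^(ip (x' i.castSucc) (x' i.succ))) * ((-1:ℝ))^(ip (x' (Fin.last j)) w) := by
        rw [Fin.prod_univ_castSucc]
        simp [Fin.snocEquiv, Fin.succ_castSucc, Fin.succ_last, -Fin.castSucc_succ]
      have e3 : (∏ i, gs i (x' i))
          = (∏ i : Fin (j+1), Fin.init fs i (x' i)) * ((-1:ℝ))^(ip (x' (Fin.last j)) w) := by
        rw [Fin.prod_univ_castSucc, Fin.prod_univ_castSucc (f := fun i => Fin.init fs i (x' i))]
        have : ∀ i : Fin j, gs i.castSucc = Fin.init fs i.castSucc := by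
          intro i
          rw [hgs, Function.update_of_ne (Fin.castSucc_lt_last i).ne]
        rw [Finset.prod_congr rfl (fun i _ => by rw [this i])]
        rw [hgs, Function.update_self]
        ring
      rw [e1, e2, e3]
      ring
    rw [Finset.sum_congr rfl (fun x' _ => step x')]
    rw [← Finset.sum_mul, IH gs]
    have e4 : Fin.init gs = Fin.init (Fin.init fs) := by
      funext i
      show gs i.castSucc = _
      rw [hgs, Function.update_of_ne (Fin.castSucc_lt_last i).ne]
      rfl
    have e5 : gs (Fin.last j) = fun v => Fin.init fs (Fin.last j) v * ((-1:ℝ))^(ip v w) := by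
      rw [hgs, Function.update_self]
    rw [e4, e5]
    show (∑ v, chainVec j (Fin.init (Fin.init fs)) v * (Fin.init fs (Fin.last j) v * ((-1:ℝ))^(ip v w)))
        * fs (Fin.last (j+1)) w = chainVec (j+1) (Fin.init fs) w * fs (Fin.last (j+1)) w
    rw [chainVec]
    congr 1
    refine Finset.sum_congr rfl fun v _ => by ring

lemma chain_parseval : ∀ (j : ℕ) (fs : Fin j → (Fin d → Bool) → ℝ),
    (∀ i v, fs i v = 1 ∨ fs i v = -1) →
    ∑ w, (chainVec j fs w)^2 = 2^((j+1)*d)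
  | 0, fs, _ => by simp [chainVec]
  | j+1, fs, hfs => by
    have : ∀ w, (chainVec (j+1) fs w)^2
        = (∑ v, (chainVec j (Fin.init fs) v * fs (Fin.last j) v) * ((-1:ℝ))^(ip v w))^2 := by
      intro w; rfl
    simp_rw [this]
    rw [sum_sq_fourier]
    have h2 : ∀ v, (chainVec j (Fin.init fs) v * fs (Fin.last j) v)^2
        = (chainVec j (Fin.init fs) v)^2 := by
      intro v
      rcases hfs (Fin.last j) v with h | h <;> rw [h] <;> ring
    simp_rw [h2]
    rw [chain_parseval j (Fin.init fs) (fun i v => hfs i.castSucc v)]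
    rw [← pow_add]
    congr 1
    ring

lemma phiK_eq (j : ℕ) (fs : Fin (j+1) → (Fin d → Bool) → ℝ) :
    phiK (j+1) d fs
      = (∑ w, chainVec j (Fin.init fs) w * fs (Fin.last j) w) / Real.sqrt ((2:ℝ)^((j+2)*d)) := by
  unfold phiK
  rw [chain_sum]

lemma alpha_eq (m : ℕ) (hk : 2 ≤ m+2) (fs : Fin (m+1) → (Fin d → Bool) → ℝ)
    (x : Fin d → Bool) :
    alphaCoeff (m+2) d hk fs x
      = (∑ w, chainVec m (Fin.init fs) w * fs (Fin.last m) w * ((-1:ℝ))^(ip w x))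
        / Real.sqrt ((2:ℝ)^((m+2)*d)) := by
  have h0 : alphaCoeff (m+2) d hk fs x
      = phiK (m+1) d (Function.update fs (Fin.last m)
          (fun z => fs (Fin.last m) z * ((-1:ℝ))^(ip z x))) := rfl
  rw [h0, phiK_eq]
  have e1 : Fin.init (Function.update fs (Fin.last m)
      (fun z => fs (Fin.last m) z * ((-1:ℝ))^(ip z x))) = Fin.init fs := by
    funext i
    show Function.update fs (Fin.last m) _ i.castSucc = fs i.castSucc
    rw [Function.update_of_ne (Fin.castSucc_lt_last i).ne]
  rw [e1, Function.update_self]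
  congr 1
  exact Finset.sum_congr rfl fun w _ => by ring

lemma phiTwist_eq (m : ℕ) (hk : 2 ≤ m+2) (fs : Fin (m+1) → (Fin d → Bool) → ℝ)
    (fk : (Fin d → Bool) → ℝ) (z : Fin d → Bool) :
    phiTwist (m+2) d hk fs fk z
      = (∑ w, chainVec (m+1) fs w * fk w * ((-1:ℝ))^(ip w z))
        / Real.sqrt ((2:ℝ)^((m+3)*d)) := by
  have h0 : phiTwist (m+2) d hk fs fk z
      = phiK (m+2) d (Function.update (fullTuple (m+2) d fs fk) (Fin.last (m+1))
          (fun w => fk w * ((-1:ℝ))^(ip w z))) := rfl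
  rw [h0, phiK_eq]
  have e1 : Fin.init (Function.update (fullTuple (m+2) d fs fk) (Fin.last (m+1))
      (fun w => fk w * ((-1:ℝ))^(ip w z))) = fs := by
    funext i
    show Function.update (fullTuple (m+2) d fs fk) (Fin.last (m+1)) _ i.castSucc = fs i
    rw [Function.update_of_ne (Fin.castSucc_lt_last i).ne]
    show fullTuple (m+2) d fs fk i.castSucc = fs i
    unfold fullTuple
    rw [dif_pos (show ((i.castSucc : Fin (m+2)):ℕ) < m+2-1 by simpa using i.isLt)]
    exact congrArg fs (by ext; simp)
  rw [e1, Function.update_self]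
  congr 1
  refine Finset.sum_congr rfl fun w _ => by ring

lemma chain_alpha (m : ℕ) (hk : 2 ≤ m+2) (fs : Fin (m+1) → (Fin d → Bool) → ℝ)
    (w : Fin d → Bool) :
    chainVec (m+1) fs w
      = Real.sqrt ((2:ℝ)^((m+2)*d)) * alphaCoeff (m+2) d hk fs w := by
  rw [alpha_eq m hk fs w]
  have hpos : (0:ℝ) < Real.sqrt ((2:ℝ)^((m+2)*d)) :=
    Real.sqrt_pos.mpr (by positivity)
  rw [mul_div_cancel₀ _ hpos.ne']
  rfl

lemma sum_half_neg_one_ip {n : ℕ} (u : Fin (n+1) → Bool) :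
    ∑ z ∈ Finset.univ.filter (fun z : Fin (n+1) → Bool => z 0 = false), ((-1:ℝ))^(ip u z)
      = if Fin.tail u = (fun _ => false) then (2:ℝ)^n else 0 := by
  have hbij : ∑ z ∈ Finset.univ.filter (fun z : Fin (n+1) → Bool => z 0 = false), ((-1:ℝ))^(ip u z)
      = ∑ z' : Fin n → Bool, ((-1:ℝ))^(ip u (Fin.cons false z')) := by
    refine Finset.sum_bij' (fun z _ => Fin.tail z) (fun z' _ => Fin.cons false z') ?_ ?_ ?_ ?_ ?_
    · intro z hz; exact Finset.mem_univ _
    · intro z' _; simp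
    · intro z hz
      simp only [Finset.mem_filter] at hz
      show Fin.cons false (Fin.tail z) = z
      have : false = z 0 := hz.2.symm
      rw [this]
      exact Fin.cons_self_tail z
    · intro z' _; exact Fin.tail_cons _ _
    · intro z hz
      simp only [Finset.mem_filter] at hz
      have hcz : Fin.cons false (Fin.tail z) = z := by
        have : false = z 0 := hz.2.symm
        rw [this]
        exact Fin.cons_self_tail z
      rw [hcz]
  rw [hbij]
  have he : ∀ z' : Fin n → Bool, ip u (Fin.cons false z') = ip (Fin.tail u) z' := by
    intro z'
    unfold ip
    rw [Fin.sum_univ_succ]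
    simp [Fin.tail]
  simp_rw [he]
  exact sum_neg_one_ip (Fin.tail u)

lemma tail_eq_tail_iff {n : ℕ} (w w' : Fin (n+1) → Bool) :
    ((fun i => xor (w i) (w' i)) ∘ Fin.succ = (fun _ : Fin n => false)) ↔ Fin.tail w' = Fin.tail w := by
  constructor
  · intro h; funext i
    have := congrFun h i
    simp only [Function.comp, Fin.tail] at this ⊢
    cases hw : w i.succ <;> cases hw' : w' i.succ <;> simp_all
  · intro h; funext i
    have := congrFun h i
    simp only [Function.comp, Fin.tail] at this ⊢
    cases hw : w i.succ <;> cases hw' : w' i.succ <;> simp_all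

lemma half_sum_fourier {n : ℕ} (B : (Fin (n+1) → Bool) → ℝ) :
    ∑ z ∈ Finset.univ.filter (fun z : Fin (n+1) → Bool => z 0 = false),
        (∑ w, B w * ((-1:ℝ))^(ip w z))^2
      = 2^n * ∑ x' : Fin n → Bool, (B (Fin.cons false x') + B (Fin.cons true x'))^2 := by
  have expand : ∀ z : Fin (n+1) → Bool, (∑ w, B w * ((-1:ℝ))^(ip w z))^2
      = ∑ w, ∑ w', B w * B w' * (((-1:ℝ))^(ip w z) * (-1)^(ip w' z)) := by
    intro z
    rw [sq, Finset.sum_mul_sum]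
    exact Finset.sum_congr rfl fun w _ => Finset.sum_congr rfl fun w' _ => by ring
  simp_rw [expand, neg_one_ip_mul]
  rw [Finset.sum_comm]
  have inner : ∀ w : Fin (n+1) → Bool,
      ∑ z ∈ Finset.univ.filter (fun z : Fin (n+1) → Bool => z 0 = false),
        ∑ w', B w * B w' * ((-1:ℝ))^(ip (fun i => xor (w i) (w' i)) z)
      = B w * (B (Fin.cons false (Fin.tail w)) + B (Fin.cons true (Fin.tail w))) * 2^n := by
    intro w
    rw [Finset.sum_comm]
    have h2 : ∀ w', ∑ z ∈ Finset.univ.filter (fun z : Fin (n+1) → Bool => z 0 = false),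
          B w * B w' * ((-1:ℝ))^(ip (fun i => xor (w i) (w' i)) z)
        = if Fin.tail w' = Fin.tail w then B w * B w' * (2:ℝ)^n else 0 := by
      intro w'
      rw [← Finset.mul_sum, sum_half_neg_one_ip]
      have : Fin.tail (fun i => xor (w i) (w' i)) = (fun i => xor (w i) (w' i)) ∘ Fin.succ := rfl
      rw [this]
      by_cases h : Fin.tail w' = Fin.tail w
      · rw [if_pos ((tail_eq_tail_iff w w').mpr h), if_pos h]
      · rw [if_neg (fun hc => h ((tail_eq_tail_iff w w').mp hc)), if_neg h, mul_zero]
    simp_rw [h2]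
    rw [← (Fin.consEquiv (fun _ : Fin (n+1) => Bool)).sum_comp]
    rw [Fintype.sum_prod_type]
    have h3 : ∀ (b' : Bool) (y' : Fin n → Bool),
        (if Fin.tail ((Fin.consEquiv (fun _ : Fin (n+1) => Bool)) (b', y')) = Fin.tail w
          then B w * B ((Fin.consEquiv (fun _ : Fin (n+1) => Bool)) (b', y')) * (2:ℝ)^n else 0)
        = if y' = Fin.tail w then B w * B (Fin.cons b' y') * (2:ℝ)^n else 0 := by
      intro b' y'
      have : (Fin.consEquiv (fun _ : Fin (n+1) => Bool)) (b', y') = Fin.cons b' y' := rfl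
      rw [this, Fin.tail_cons]
    simp_rw [h3]
    rw [Fintype.sum_bool]
    rw [Finset.sum_ite_eq' Finset.univ (Fin.tail w) (fun y' => B w * B (Fin.cons true y') * (2:ℝ)^n)]
    rw [Finset.sum_ite_eq' Finset.univ (Fin.tail w) (fun y' => B w * B (Fin.cons false y') * (2:ℝ)^n)]
    simp only [Finset.mem_univ, if_true]
    ring
  simp_rw [inner]
  rw [← (Fin.consEquiv (fun _ : Fin (n+1) => Bool)).sum_comp]
  rw [Fintype.sum_prod_type]
  have h4 : ∀ (b : Bool) (x' : Fin n → Bool),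
      (Fin.consEquiv (fun _ : Fin (n+1) => Bool)) (b, x') = Fin.cons b x' := fun _ _ => rfl
  simp_rw [h4, Fin.tail_cons]
  rw [Fintype.sum_bool]
  rw [← Finset.sum_add_distrib, Finset.mul_sum]
  refine Finset.sum_congr rfl fun x' _ => by ring

lemma alpha_parseval (m : ℕ) (hk : 2 ≤ m+2) (fs : Fin (m+1) → (Fin d → Bool) → ℝ)
    (hfs : ∀ i x, fs i x = 1 ∨ fs i x = -1) :
    ∑ x, (alphaCoeff (m+2) d hk fs x)^2 = 1 := by
  have h1 : ∀ x, (alphaCoeff (m+2) d hk fs x)^2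
      = (∑ w, (chainVec m (Fin.init fs) w * fs (Fin.last m) w) * ((-1:ℝ))^(ip w x))^2
        / ((2:ℝ)^((m+2)*d)) := by
    intro x
    rw [alpha_eq m hk fs x, div_pow, Real.sq_sqrt (by positivity)]
  simp_rw [h1]
  rw [← Finset.sum_div, sum_sq_fourier]
  have h2 : ∀ w, (chainVec m (Fin.init fs) w * fs (Fin.last m) w)^2
      = (chainVec m (Fin.init fs) w)^2 := by
    intro w
    rcases hfs (Fin.last m) w with h | h <;> rw [h] <;> ring
  simp_rw [h2]
  rw [chain_parseval m (Fin.init fs) (fun i v => hfs i.castSucc v)]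
  rw [← pow_add]
  rw [div_eq_one_iff_eq (by positivity)]
  congr 1
  ring

lemma sum_split_cons {n : ℕ} (g : (Fin (n+1) → Bool) → ℝ) :
    ∑ w, g w = (∑ x' : Fin n → Bool, g (Fin.cons false x'))
      + ∑ x' : Fin n → Bool, g (Fin.cons true x') := by
  rw [← (Fin.consEquiv (fun _ : Fin (n+1) => Bool)).sum_comp g]
  rw [Fintype.sum_prod_type, Fintype.sum_bool]
  have h1 : ∀ (b : Bool) (x' : Fin n → Bool),
      g ((Fin.consEquiv (fun _ : Fin (n+1) => Bool)) (b, x')) = g (Fin.cons b x') :=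
    fun _ _ => rfl
  simp_rw [h1]
  exact add_comm _ _

lemma part1 (m n : ℕ) (hk : 2 ≤ m + 2) (fs : Fin (m+1) → (Fin (n+1) → Bool) → ℝ)
    (hfs : ∀ i x, fs i x = 1 ∨ fs i x = -1)
    (fk : (Fin (n+1) → Bool) → ℝ) (hfk : ∀ w, fk w = 1 ∨ fk w = -1) :
    halfSum (m+2) n hk fs fk
      = 1/2 + ∑ x' : Fin n → Bool,
          alphaCoeff (m+2) (n+1) hk fs (Fin.cons false x') *
          alphaCoeff (m+2) (n+1) hk fs (Fin.cons true x') *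
          fk (Fin.cons false x') * fk (Fin.cons true x') := by
  set α := alphaCoeff (m+2) (n+1) hk fs with hα
  set B : (Fin (n+1) → Bool) → ℝ := fun w => α w * fk w with hB
  have hTw : ∀ z, phiTwist (m+2) (n+1) hk fs fk z
      = (∑ w, B w * ((-1:ℝ))^(ip w z)) / Real.sqrt ((2:ℝ)^(n+1)) := by
    intro z
    rw [phiTwist_eq m hk fs fk z]
    have h1 : ∀ w, chainVec (m+1) fs w * fk w * ((-1:ℝ))^(ip w z)
        = Real.sqrt ((2:ℝ)^((m+2)*(n+1))) * (B w * ((-1:ℝ))^(ip w z)) := by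
      intro w; rw [chain_alpha m hk fs w]; rw [hB]; ring
    simp_rw [h1]
    rw [← Finset.mul_sum]
    have hsp : Real.sqrt ((2:ℝ)^((m+3)*(n+1)))
        = Real.sqrt ((2:ℝ)^((m+2)*(n+1))) * Real.sqrt ((2:ℝ)^(n+1)) := by
      rw [← Real.sqrt_mul (by positivity), ← pow_add]
      congr 1
      ring
    rw [hsp, mul_div_mul_left]
    exact (Real.sqrt_pos.mpr (by positivity)).ne'
  have hsq : ∀ z, (phiTwist (m+2) (n+1) hk fs fk z)^2
      = (∑ w, B w * ((-1:ℝ))^(ip w z))^2 / ((2:ℝ)^(n+1)) := by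
    intro z
    rw [hTw z, div_pow, Real.sq_sqrt (by positivity)]
  unfold halfSum
  simp_rw [hsq]
  rw [← Finset.sum_div, half_sum_fourier]
  have hfk2 : ∀ w, fk w ^ 2 = 1 := by
    intro w; rcases hfk w with h | h <;> rw [h] <;> ring
  have hexp : ∀ x' : Fin n → Bool,
      (B (Fin.cons false x') + B (Fin.cons true x'))^2
      = (α (Fin.cons false x'))^2 + (α (Fin.cons true x'))^2
        + 2 * (α (Fin.cons false x') * α (Fin.cons true x') *
            fk (Fin.cons false x') * fk (Fin.cons true x')) := by
    intro x'
    rw [hB]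
    simp only []
    have e0 := hfk2 (Fin.cons false x')
    have e1 := hfk2 (Fin.cons true x')
    nlinarith [e0, e1]
  rw [Finset.sum_congr rfl (fun x' _ => hexp x')]
  rw [Finset.sum_add_distrib, Finset.sum_add_distrib]
  have hpars : (∑ x' : Fin n → Bool, (α (Fin.cons false x'))^2)
      + (∑ x' : Fin n → Bool, (α (Fin.cons true x'))^2) = 1 := by
    rw [← sum_split_cons (fun w => (α w)^2)]
    exact alpha_parseval (d := n+1) m hk fs hfs
  rw [← Finset.mul_sum]
  rw [hpars]
  have h2n : ((2:ℝ))^(n+1) = 2 * 2^n := by ring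
  rw [h2n]
  have hne : ((2:ℝ))^n ≠ 0 := by positivity
  field_simp

lemma exp_add_exp_neg_le (x : ℝ) : Real.exp x + Real.exp (-x) ≤ 2 * Real.exp (x^2/2) := by
  have h1 : Real.exp x + Real.exp (-x) = 2 * Real.cosh x := by rw [Real.cosh_eq]; ring
  rw [h1]
  have h2 := Real.cosh_le_exp_half_sq x
  nlinarith

lemma mgf_sum {ι : Type*} [Fintype ι] [DecidableEq ι] (a : ι → ℝ) (l : ℝ) :
    ∑ σ : ι → Bool, Real.exp (l * ∑ i, a i * (if σ i then (1:ℝ) else -1))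
      = ∏ i, (Real.exp (l * a i) + Real.exp (-(l * a i))) := by
  have h1 : ∀ σ : ι → Bool, Real.exp (l * ∑ i, a i * (if σ i then (1:ℝ) else -1))
      = ∏ i, Real.exp (l * (a i * (if σ i then (1:ℝ) else -1))) := by
    intro σ; rw [Finset.mul_sum, Real.exp_sum]
  simp_rw [h1]
  rw [← Fintype.prod_sum (f := fun i (b : Bool) => Real.exp (l * (a i * (if b then (1:ℝ) else -1))))]
  refine Finset.prod_congr rfl fun i _ => ?_
  rw [Fintype.sum_bool]
  norm_num

lemma mgf_bound {ι : Type*} [Fintype ι] [DecidableEq ι] (a : ι → ℝ) (l : ℝ) :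
    ∑ σ : ι → Bool, Real.exp (l * ∑ i, a i * (if σ i then (1:ℝ) else -1))
      ≤ (2:ℝ)^(Fintype.card ι) * Real.exp (l^2 * (∑ i, (a i)^2) / 2) := by
  rw [mgf_sum]
  have h1 : ∀ i : ι, Real.exp (l * a i) + Real.exp (-(l * a i))
      ≤ 2 * Real.exp ((l * a i)^2/2) := fun i => exp_add_exp_neg_le (l * a i)
  calc ∏ i, (Real.exp (l * a i) + Real.exp (-(l * a i)))
      ≤ ∏ i, 2 * Real.exp ((l * a i)^2/2) := by
        refine Finset.prod_le_prod (fun i _ => by positivity) (fun i _ => h1 i)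
    _ = (2:ℝ)^(Fintype.card ι) * Real.exp (l^2 * (∑ i, (a i)^2) / 2) := by
        rw [Finset.prod_mul_distrib, Finset.prod_const, ← Real.exp_sum]
        have hsum : ∑ x : ι, (l * a x)^2/2 = l^2 * (∑ i, (a i)^2)/2 := by
          have h2 : ∀ x : ι, (l * a x)^2/2 = l^2 * (a x)^2/2 := fun x => by ring
          simp_rw [h2]
          rw [← Finset.sum_div, ← Finset.mul_sum]
        rw [hsum, Finset.card_univ]

lemma one_sided_tail {ι : Type*} [Fintype ι] [DecidableEq ι] (a : ι → ℝ) (s V : ℝ)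
    (hs : 0 < s) (hV : 0 < V) (hVa : ∑ i, (a i)^2 ≤ V) :
    ((Finset.univ.filter (fun σ : ι → Bool =>
        s ≤ ∑ i, a i * (if σ i then (1:ℝ) else -1))).card : ℝ)
      ≤ Real.exp (-s^2/(2*V)) * 2^(Fintype.card ι) := by
  set l : ℝ := s / V with hl
  have hlpos : 0 < l := div_pos hs hV
  have markov : ((Finset.univ.filter (fun σ : ι → Bool =>
        s ≤ ∑ i, a i * (if σ i then (1:ℝ) else -1))).card : ℝ) * Real.exp (l * s)
      ≤ ∑ σ : ι → Bool, Real.exp (l * ∑ i, a i * (if σ i then (1:ℝ) else -1)) := by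
    calc ((Finset.univ.filter (fun σ : ι → Bool =>
            s ≤ ∑ i, a i * (if σ i then (1:ℝ) else -1))).card : ℝ) * Real.exp (l * s)
        = ∑ _σ ∈ (Finset.univ.filter (fun σ : ι → Bool =>
            s ≤ ∑ i, a i * (if σ i then (1:ℝ) else -1))), Real.exp (l * s) := by
          rw [Finset.sum_const, nsmul_eq_mul]
      _ ≤ ∑ σ ∈ (Finset.univ.filter (fun σ : ι → Bool =>
            s ≤ ∑ i, a i * (if σ i then (1:ℝ) else -1))),
            Real.exp (l * ∑ i, a i * (if σ i then (1:ℝ) else -1)) := by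
          refine Finset.sum_le_sum fun σ hσ => ?_
          simp only [Finset.mem_filter] at hσ
          exact Real.exp_le_exp.mpr (mul_le_mul_of_nonneg_left hσ.2 hlpos.le)
      _ ≤ ∑ σ : ι → Bool, Real.exp (l * ∑ i, a i * (if σ i then (1:ℝ) else -1)) := by
          refine Finset.sum_le_sum_of_subset_of_nonneg (Finset.filter_subset _ _)
            (fun σ _ _ => (Real.exp_pos _).le)
  have chain := le_trans markov (mgf_bound a l)
  have hstep : (2:ℝ)^(Fintype.card ι) * Real.exp (l^2 * (∑ i, (a i)^2) / 2)
      ≤ (2:ℝ)^(Fintype.card ι) * Real.exp (l^2 * V / 2) := by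
    refine mul_le_mul_of_nonneg_left (Real.exp_le_exp.mpr ?_) (by positivity)
    have : (0:ℝ) ≤ l^2 := sq_nonneg l
    nlinarith
  have chain2 := le_trans chain hstep
  have hexp : Real.exp (l * s) > 0 := Real.exp_pos _
  rw [← le_div_iff₀ hexp] at chain2
  calc ((Finset.univ.filter (fun σ : ι → Bool =>
        s ≤ ∑ i, a i * (if σ i then (1:ℝ) else -1))).card : ℝ)
      ≤ (2:ℝ)^(Fintype.card ι) * Real.exp (l^2 * V / 2) / Real.exp (l * s) := chain2
    _ = (2:ℝ)^(Fintype.card ι) * (Real.exp (l^2 * V / 2) / Real.exp (l * s)) := by ring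
    _ = Real.exp (-s^2/(2*V)) * 2^(Fintype.card ι) := by
        rw [← Real.exp_sub]
        have h3 : l^2 * V / 2 - l * s = -s^2/(2*V) := by
          rw [hl]
          field_simp
          ring
        rw [h3]
        ring

lemma two_sided_tail {ι : Type*} [Fintype ι] [DecidableEq ι] (a : ι → ℝ) (s V : ℝ)
    (hs : 0 < s) (hV : 0 < V) (hVa : ∑ i, (a i)^2 ≤ V) :
    ((Finset.univ.filter (fun σ : ι → Bool =>
        s ≤ |∑ i, a i * (if σ i then (1:ℝ) else -1)|)).card : ℝ)
      ≤ 2 * Real.exp (-s^2/(2*V)) * 2^(Fintype.card ι) := by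
  have hsub : (Finset.univ.filter (fun σ : ι → Bool =>
        s ≤ |∑ i, a i * (if σ i then (1:ℝ) else -1)|))
      ⊆ (Finset.univ.filter (fun σ : ι → Bool =>
          s ≤ ∑ i, a i * (if σ i then (1:ℝ) else -1)))
        ∪ (Finset.univ.filter (fun σ : ι → Bool =>
          s ≤ ∑ i, (-a) i * (if σ i then (1:ℝ) else -1))) := by
    intro σ hσ
    simp only [Finset.mem_filter, Finset.mem_union, Finset.mem_univ, true_and] at hσ ⊢
    rcases abs_cases (∑ i, a i * (if σ i then (1:ℝ) else -1)) with ⟨he, _⟩ | ⟨he, _⟩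
    · left; rw [← he]; exact hσ
    · right
      have : ∑ i, (-a) i * (if σ i then (1:ℝ) else -1)
          = -∑ i, a i * (if σ i then (1:ℝ) else -1) := by
        rw [← Finset.sum_neg_distrib]
        exact Finset.sum_congr rfl fun i _ => by rw [Pi.neg_apply]; ring
      rw [this, ← he]
      exact hσ
  have hcard := Finset.card_le_card hsub
  have hun := Finset.card_union_le (Finset.univ.filter (fun σ : ι → Bool =>
          s ≤ ∑ i, a i * (if σ i then (1:ℝ) else -1)))
        (Finset.univ.filter (fun σ : ι → Bool =>
          s ≤ ∑ i, (-a) i * (if σ i then (1:ℝ) else -1)))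
  have h1 := one_sided_tail a s V hs hV hVa
  have h2 := one_sided_tail (-a) s V hs hV (by simpa using hVa)
  have : ((Finset.univ.filter (fun σ : ι → Bool =>
        s ≤ |∑ i, a i * (if σ i then (1:ℝ) else -1)|)).card : ℝ)
      ≤ ((Finset.univ.filter (fun σ : ι → Bool =>
          s ≤ ∑ i, a i * (if σ i then (1:ℝ) else -1))).card : ℝ)
        + ((Finset.univ.filter (fun σ : ι → Bool =>
          s ≤ ∑ i, (-a) i * (if σ i then (1:ℝ) else -1))).card : ℝ) := by
    push_cast
    exact_mod_cast le_trans (Nat.cast_le.mpr hcard) (Nat.cast_le.mpr hun)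
  linarith

lemma beq_absorb (a b : Bool) : (a == (a == b)) = b := by cases a <;> cases b <;> rfl

lemma cons_bit_tail {n : ℕ} (w : Fin (n+1) → Bool) (b : Bool) (h : w 0 = b) :
    Fin.cons b (Fin.tail w) = w := by
  have : b = w 0 := h.symm
  rw [this]
  exact Fin.cons_self_tail w

def pairEquiv (n : ℕ) : ((Fin (n+1) → Bool) → Bool)
    ≃ (((Fin n → Bool) → Bool) × ((Fin n → Bool) → Bool)) where
  toFun fkb := (fun x' => fkb (Fin.cons false x'),
                fun x' => fkb (Fin.cons false x') == fkb (Fin.cons true x'))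
  invFun p := fun w => if w 0 then (p.1 (Fin.tail w) == p.2 (Fin.tail w)) else p.1 (Fin.tail w)
  left_inv fkb := by
    funext w
    cases hw : w 0 with
    | false =>
      simp only [hw, Bool.false_eq_true, if_false]
      rw [cons_bit_tail w false hw]
    | true =>
      simp only [hw, if_true]
      rw [beq_absorb]
      rw [cons_bit_tail w true hw]
  right_inv p := by
    refine Prod.ext ?_ ?_
    · funext x'
      simp [Fin.cons_zero, Fin.tail_cons]
    · funext x'
      simp only [Fin.cons_zero, Fin.tail_cons, Bool.false_eq_true, if_false, if_true]
      rw [beq_absorb]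

lemma count_eq (n : ℕ) (P : ((Fin n → Bool) → Bool) → Prop) :
    Nat.card {fkb : (Fin (n+1) → Bool) → Bool // P ((pairEquiv n fkb).2)}
      = 2^(2^n) * Nat.card {σ : (Fin n → Bool) → Bool // P σ} := by
  have e1 : {fkb : (Fin (n+1) → Bool) → Bool // P ((pairEquiv n fkb).2)}
      ≃ {pr : ((Fin n → Bool) → Bool) × ((Fin n → Bool) → Bool) // P pr.2} :=
    Equiv.subtypeEquiv (pairEquiv n) (fun fkb => Iff.rfl)
  have e2 : {pr : ((Fin n → Bool) → Bool) × ((Fin n → Bool) → Bool) // P pr.2}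
      ≃ ((Fin n → Bool) → Bool) × {σ : (Fin n → Bool) → Bool // P σ} :=
    { toFun := fun x => (x.1.1, ⟨x.1.2, x.2⟩)
      invFun := fun y => ⟨(y.1, y.2.1), y.2.2⟩
      left_inv := fun _ => rfl
      right_inv := fun _ => rfl }
  rw [Nat.card_congr (e1.trans e2), Nat.card_prod]
  congr 1
  rw [Nat.card_eq_fintype_card]
  rw [Fintype.card_fun]
  simp

lemma part2 (m n : ℕ) (hk : 2 ≤ m + 2) (fs : Fin (m+1) → (Fin (n+1) → Bool) → ℝ)
    (hfs : ∀ i x, fs i x = 1 ∨ fs i x = -1)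
    (hα : ∀ x : Fin (n+1) → Bool,
      |alphaCoeff (m+2) (n+1) hk fs x|
        ≤ Real.log ((2:ℝ)^(n+1)) / Real.sqrt ((2:ℝ)^(n+1)))
    (t : ℝ) (ht : 0 < t) :
    (({fk : (Fin (n + 1) → Bool) → Bool |
        t / Real.sqrt ((2 : ℝ) ^ (n + 1))
          ≤ |halfSum (m+2) n hk fs (fun w => if fk w then 1 else -1) - 1 / 2|} :
      Set ((Fin (n + 1) → Bool) → Bool)).ncard : ℝ) / 2 ^ (2 ^ (n + 1))
      ≤ 2 * Real.exp (-t ^ 2 / (4 * (Real.log ((2 : ℝ) ^ (n + 1))) ^ 4)) := by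
  set L : ℝ := Real.log ((2:ℝ)^(n+1)) with hLdef
  have hL : 0 < L := Real.log_pos (one_lt_pow₀ (by norm_num) (by omega))
  have hL4 : 0 < L^4 := pow_pos hL 4
  have hsqpos : 0 < Real.sqrt ((2:ℝ)^(n+1)) := Real.sqrt_pos.mpr (by positivity)
  have hsq : (Real.sqrt ((2:ℝ)^(n+1)))^2 = 2^(n+1) := Real.sq_sqrt (by positivity)
  set α : (Fin (n+1) → Bool) → ℝ := alphaCoeff (m+2) (n+1) hk fs with hαdef
  set a : (Fin n → Bool) → ℝ := fun x' => α (Fin.cons false x') * α (Fin.cons true x') with hadef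
  set s : ℝ := t / Real.sqrt ((2:ℝ)^(n+1)) with hsdef
  have hs : 0 < s := div_pos ht hsqpos
  set V : ℝ := L^4 / (2:ℝ)^(n+2) with hVdef
  have hV : 0 < V := div_pos hL4 (by positivity)
  set P : ((Fin n → Bool) → Bool) → Prop :=
    fun σ => s ≤ |∑ x', a x' * (if σ x' then (1:ℝ) else -1)| with hPdef
  have hprod : ∀ u v : Bool, ((if u then (1:ℝ) else -1) * (if v then 1 else -1))
      = (if (u == v) then (1:ℝ) else -1) := by
    intro u v; cases u <;> cases v <;> norm_num
  have hmember : ∀ fk : (Fin (n+1) → Bool) → Bool,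
      (t / Real.sqrt ((2 : ℝ) ^ (n + 1))
          ≤ |halfSum (m+2) n hk fs (fun w => if fk w then 1 else -1) - 1 / 2|)
        ↔ P ((pairEquiv n fk).2) := by
    intro fk
    have hfk : ∀ w, (if fk w then (1:ℝ) else -1) = 1 ∨ (if fk w then (1:ℝ) else -1) = -1 :=
      fun w => by cases fk w <;> simp
    rw [part1 m n hk fs hfs _ hfk]
    have hdiff : (1:ℝ)/2 + (∑ x' : Fin n → Bool,
          α (Fin.cons false x') * α (Fin.cons true x') *
          (if fk (Fin.cons false x') then (1:ℝ) else -1) *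
          (if fk (Fin.cons true x') then (1:ℝ) else -1)) - 1/2
        = ∑ x' : Fin n → Bool, a x' * (if ((pairEquiv n fk).2 x') then (1:ℝ) else -1) := by
      rw [add_sub_cancel_left]
      refine Finset.sum_congr rfl fun x' _ => ?_
      have : (pairEquiv n fk).2 x' = (fk (Fin.cons false x') == fk (Fin.cons true x')) := rfl
      rw [this, hadef, ← hprod]
      ring
    rw [hdiff]
  have hsets : {fk : (Fin (n + 1) → Bool) → Bool |
        t / Real.sqrt ((2 : ℝ) ^ (n + 1))
          ≤ |halfSum (m+2) n hk fs (fun w => if fk w then 1 else -1) - 1 / 2|}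
      = {fk : (Fin (n + 1) → Bool) → Bool | P ((pairEquiv n fk).2)} :=
    Set.ext fun fk => hmember fk
  rw [hsets, ← Nat.card_coe_set_eq]
  have hcount : Nat.card ({fk : (Fin (n + 1) → Bool) → Bool | P ((pairEquiv n fk).2)} :
      Set ((Fin (n + 1) → Bool) → Bool)) = 2^(2^n) * (Finset.univ.filter P).card := by
    rw [Set.coe_setOf]
    rw [count_eq n P, Nat.card_eq_fintype_card, Fintype.card_subtype]
  rw [hcount]
  -- variance bound
  have hax : ∀ x' : Fin n → Bool, (a x')^2 ≤ L^4 / (2:ℝ)^(2*(n+1)) := by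
    intro x'
    have h0 := hα (Fin.cons false x')
    have h1 := hα (Fin.cons true x')
    have e0 : (α (Fin.cons false x'))^2 ≤ (L/Real.sqrt ((2:ℝ)^(n+1)))^2 := by
      rw [← sq_abs]; exact pow_le_pow_left₀ (abs_nonneg _) h0 2
    have e1 : (α (Fin.cons true x'))^2 ≤ (L/Real.sqrt ((2:ℝ)^(n+1)))^2 := by
      rw [← sq_abs]; exact pow_le_pow_left₀ (abs_nonneg _) h1 2
    have hq : (L/Real.sqrt ((2:ℝ)^(n+1)))^2 = L^2/(2:ℝ)^(n+1) := by
      rw [div_pow, hsq]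
    calc (a x')^2 = (α (Fin.cons false x'))^2 * (α (Fin.cons true x'))^2 := by
          rw [hadef]; ring
      _ ≤ (L/Real.sqrt ((2:ℝ)^(n+1)))^2 * (L/Real.sqrt ((2:ℝ)^(n+1)))^2 :=
          mul_le_mul e0 e1 (sq_nonneg _) (sq_nonneg _)
      _ = L^4 / (2:ℝ)^(2*(n+1)) := by
          rw [hq, div_mul_div_comm]
          congr 1
          · ring
          · rw [← pow_add]
            congr 1
            ring
  have hVa : ∑ x' : Fin n → Bool, (a x')^2 ≤ V := by
    calc ∑ x' : Fin n → Bool, (a x')^2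
        ≤ ∑ _x' : Fin n → Bool, L^4/(2:ℝ)^(2*(n+1)) :=
          Finset.sum_le_sum (fun x' _ => hax x')
      _ = (2:ℝ)^n * (L^4/(2:ℝ)^(2*(n+1))) := by
          rw [Finset.sum_const, nsmul_eq_mul, Finset.card_univ]
          congr 1
          simp [Fintype.card_fun]
      _ = V := by
          rw [hVdef]
          have h2e : (2:ℝ)^(2*(n+1)) = 2^(n+2) * 2^n := by
            rw [← pow_add]; congr 1; ring
          rw [h2e]
          field_simp
  have htail := two_sided_tail a s V hs hV hVa
  have hcard : Fintype.card (Fin n → Bool) = 2^n := by simp [Fintype.card_fun]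
  rw [hcard] at htail
  -- final arithmetic
  have h2split : ((2:ℝ))^(2^(n+1)) = 2^(2^n) * 2^(2^n) := by
    rw [← pow_add]; congr 1
    rw [pow_succ]; ring
  have hexp_eq : -s^2/(2*V) = -t^2/L^4 := by
    rw [hsdef, hVdef, div_pow, hsq]
    have h2 : 2 * (L^4 / (2:ℝ)^(n+2)) = L^4/(2:ℝ)^(n+1) := by
      rw [pow_succ]
      field_simp
      ring
    rw [h2]
    have hne1 : ((2:ℝ))^(n+1) ≠ 0 := by positivity
    have hne2 : L^4 ≠ 0 := hL4.ne'
    rw [neg_div, neg_div, div_div_div_cancel_right₀]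
    exact hne1
  have hexp_le : Real.exp (-s^2/(2*V)) ≤ Real.exp (-t^2/(4*L^4)) := by
    rw [hexp_eq]
    refine Real.exp_le_exp.mpr ?_
    rw [neg_div, neg_div, neg_le_neg_iff]
    rw [div_le_div_iff₀ (by positivity) (by positivity)]
    nlinarith [sq_nonneg t, hL4]
  push_cast
  rw [h2split]
  have h2n : (0:ℝ) < 2^(2^n) := by positivity
  rw [div_le_iff₀ (by positivity)]
  calc (2:ℝ)^(2^n) * ((Finset.univ.filter P).card : ℝ)
      ≤ (2:ℝ)^(2^n) * (2 * Real.exp (-s^2/(2*V)) * 2^(2^n)) := by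
        refine mul_le_mul_of_nonneg_left ?_ (by positivity)
        exact htail
    _ ≤ (2:ℝ)^(2^n) * (2 * Real.exp (-t^2/(4*L^4)) * 2^(2^n)) := by
        refine mul_le_mul_of_nonneg_left ?_ (by positivity)
        refine mul_le_mul_of_nonneg_right (by linarith) (by positivity)
    _ = 2 * Real.exp (-t^2/(4*L^4)) * ((2:ℝ)^(2^n) * 2^(2^n)) := by ring

end HSaux







/-- For fixed `f_1,…,f_{k−1}` with `|α_x| ≤ (log N)/√N` (`N = 2^{n+1}`), and `y = 10⋯0`:
the quantity `Σ_{z : z·y=0} Φ_{f_1,…,f_{k−1},f_k^{(z)}}²` equals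
`1/2 + Σ_{x'} α_{0x'} α_{1x'} f_k(0x') f_k(1x')`, and for a uniformly random `f_k`,
`Pr[|Σ_{z:z·y=0} Φ² − 1/2| ≥ t/√N] ≤ 2·exp(−t²/(4·log⁴N))`. -/
theorem halfSum_identity_and_tail (k n : ℕ) (hk : 2 ≤ k)
    (fs : Fin (k - 1) → (Fin (n + 1) → Bool) → ℝ)
    (hfs : ∀ i x, fs i x = 1 ∨ fs i x = -1)
    (hα : ∀ x : Fin (n + 1) → Bool,
      |alphaCoeff k (n + 1) hk fs x|
        ≤ Real.log ((2 : ℝ) ^ (n + 1)) / Real.sqrt ((2 : ℝ) ^ (n + 1))) :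
    (∀ fk : (Fin (n + 1) → Bool) → ℝ, (∀ w, fk w = 1 ∨ fk w = -1) →
      halfSum k n hk fs fk
        = 1 / 2 + ∑ x' : Fin n → Bool,
            alphaCoeff k (n + 1) hk fs (Fin.cons false x') *
            alphaCoeff k (n + 1) hk fs (Fin.cons true x') *
            fk (Fin.cons false x') * fk (Fin.cons true x'))
    ∧ (∀ t : ℝ, 0 < t →
        (({fk : (Fin (n + 1) → Bool) → Bool |
            t / Real.sqrt ((2 : ℝ) ^ (n + 1))
              ≤ |halfSum k n hk fs (fun w => if fk w then 1 else -1) - 1 / 2|} :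
          Set ((Fin (n + 1) → Bool) → Bool)).ncard : ℝ) / 2 ^ (2 ^ (n + 1))
          ≤ 2 * Real.exp (-t ^ 2 / (4 * (Real.log ((2 : ℝ) ^ (n + 1))) ^ 4))) := by
  obtain ⟨m, rfl⟩ : ∃ m, k = m + 2 := ⟨k - 2, by omega⟩
  constructor
  · intro fk hfk
    exact HSaux.part1 m n hk fs hfs fk hfk
  · intro t ht
    exact HSaux.part2 m n hk fs hfs hα t ht
end
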